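/- arXiv:math/0009094 — 3 statements merged into one kernel-verified Lean document; each statement's English description precedes it below -/
import Mathlib

section
/- Let σ be the substitution on {1,2,3} defined by σ(1)=12, σ(2)=312, σ(3)=3312, and let x be its fixed point, beginning 1231233121231233123312123121231233121231231233⋯. Then the set of return words over the factor 23 in x contains the four distinct words 231, 2331, 23121, 233121; in particular the number of return words over 23 is strictly greater than 3. -/
/-!
The four return words are read off the prefix `σ⁴(1)` of `x`, which has length `41`.
The bound on the count also needs the set of return words to be finite (`Set.ncard` of an
infinite set is `0`): `x = σ²(x)` is a concatenation of blocks `σ²(a)` of length at most `13`,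
each containing `23`, so consecutive occurrences of `23` are less than `26` apart, and `x` only
takes the values `1, 2, 3`.
-/

/-- `w` occurs in the infinite word `U` at position `i`. -/
def OccursAt {A : Type*} (U : ℕ → A) (w : List A) (i : ℕ) : Prop :=
  ∀ j : Fin w.length, U (i + j) = w.get j

/-- `w` is a factor of the infinite word `U`. -/
def IsFactor {A : Type*} (U : ℕ → A) (w : List A) : Prop := ∃ i, OccursAt U w i

/-- `U` is recurrent: every factor occurs infinitely often. -/
def Recurrent {A : Type*} (U : ℕ → A) : Prop :=
  ∀ w, IsFactor U w → ∀ N, ∃ i, N ≤ i ∧ OccursAt U w i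

/-- The set of return words over `w` in `U`: words starting at an occurrence of `w`
and ending just before the next occurrence. -/
def ReturnWords {A : Type*} (U : ℕ → A) (w : List A) : Set (List A) :=
  {r | ∃ i j, OccursAt U w i ∧ OccursAt U w j ∧ i < j ∧
      (∀ t, i < t → t < j → ¬ OccursAt U w t) ∧
      r = List.ofFn (fun t : Fin (j - i) => U (i + t))}

/-- The complexity function: number of distinct factors of length `n`. -/
noncomputable def Complexity {A : Type*} (U : ℕ → A) (n : ℕ) : ℕ :=
  Set.ncard {w : List A | w.length = n ∧ IsFactor U w}

/-- The recoded Chacon substitution: `σ(1)=12, σ(2)=312, σ(3)=3312`. -/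
def chacon : ℕ → List ℕ := fun a =>
  if a = 1 then [1, 2] else if a = 2 then [3, 1, 2] else if a = 3 then [3, 3, 1, 2] else []

theorem Set.Finite.setOf_length_le_forall_mem {α : Type*} {S : Set α} (hS : S.Finite) (n : ℕ) :
    {l : List α | l.length ≤ n ∧ ∀ a ∈ l, a ∈ S}.Finite := by
  have : Finite S := hS
  refine ((List.finite_length_le S n).image (List.map (↑))).subset ?_
  rintro l ⟨hlen, hmem⟩
  lift l to List S using hmem
  exact ⟨l, by simpa using hlen, rfl⟩

section InfiniteWords

variable {α : Type*} {x : ℕ → α} {w : List α}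

theorem finite_returnWords (hx : (Set.range x).Finite) {C : ℕ}
    (hgap : ∀ n, ∃ t, n < t ∧ t ≤ n + C ∧ OccursAt x w t) : (ReturnWords x w).Finite := by
  refine (hx.setOf_length_le_forall_mem C).subset ?_
  rintro r ⟨i, j, -, -, hij, hnext, rfl⟩
  obtain ⟨t, hit, htC, ht⟩ := hgap i
  have hjt : j ≤ t := by
    by_contra! htj
    exact hnext t hit htj ht
  refine ⟨by simp only [List.length_ofFn]; omega, fun a ha => ?_⟩
  obtain ⟨s, rfl⟩ := List.mem_ofFn.mp ha
  exact ⟨_, rfl⟩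

variable {L : List α} (hL : ∀ n (hn : n < L.length), x n = L[n])
include hL

theorem occursAt_iff_prefix_drop {t : ℕ} (ht : t + w.length ≤ L.length) :
    OccursAt x w t ↔ w <+: L.drop t := by
  rw [List.prefix_iff_eq_take, List.ext_get_iff]
  simp only [List.length_take, List.length_drop, List.get_eq_getElem, List.getElem_take,
    List.getElem_drop]
  refine ⟨fun h => ⟨by omega, fun j hj _ => ?_⟩, fun ⟨_, h⟩ j => ?_⟩
  · rw [← hL, h ⟨j, hj⟩, List.get_eq_getElem]
  · rw [List.get_eq_getElem, h j j.2 (by omega), hL]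

theorem ofFn_eq_take_drop {i j : ℕ} (hj : j ≤ L.length) :
    List.ofFn (fun t : Fin (j - i) => x (i + t)) = (L.drop i).take (j - i) := by
  refine List.ext_getElem (by simp; omega) fun t h₁ h₂ => ?_
  simp only [List.getElem_ofFn, List.getElem_take, List.getElem_drop]
  exact hL _ _

theorem mem_returnWords_of_agree {r : List α} (i j : ℕ)
    (h : i < j ∧ j + w.length ≤ L.length ∧ w <+: L.drop i ∧ w <+: L.drop j ∧
      (∀ t ∈ Finset.Ioo i j, ¬ w <+: L.drop t) ∧ (L.drop i).take (j - i) = r) :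
    r ∈ ReturnWords x w := by
  obtain ⟨hij, hjL, hi, hj, hgap, rfl⟩ := h
  refine ⟨i, j, (occursAt_iff_prefix_drop hL (by omega)).2 hi,
    (occursAt_iff_prefix_drop hL hjL).2 hj, hij, fun t hit htj ht => ?_,
    (ofFn_eq_take_drop hL (by omega)).symm⟩
  exact hgap t (Finset.mem_Ioo.2 ⟨hit, htj⟩) ((occursAt_iff_prefix_drop hL (by omega)).1 ht)

end InfiniteWords

section Substitution

variable {α β : Type*}

theorem List.IsPrefix.iterate_flatMap (f : α → List α) {l₁ l₂ : List α} (h : l₁ <+: l₂)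
    (k : ℕ) : (·.flatMap f)^[k] l₁ <+: (·.flatMap f)^[k] l₂ := by
  induction k with
  | zero => exact h
  | succ k ih => simpa only [Function.iterate_succ_apply'] using ih.flatMap f

theorem List.IsPrefix.self_iterate_flatMap (f : α → List α) {l : List α}
    (h : l <+: l.flatMap f) (k : ℕ) : l <+: (·.flatMap f)^[k] l := by
  induction k with
  | zero => exact List.prefix_rfl
  | succ k ih =>
    rw [Function.iterate_succ_apply]
    exact ih.trans (h.iterate_flatMap f k)

theorem ofFn_eq_iterate_flatMap (f : α → List α) {x : ℕ → α}
    (hfix : ∀ N : ℕ,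
      (List.ofFn fun i : Fin N => x i) <+: (List.ofFn fun i : Fin N => x i).flatMap f)
    {k : ℕ} (hk : (·.flatMap f)^[k] [x 0] ≠ []) :
    (List.ofFn fun i : Fin ((·.flatMap f)^[k] [x 0]).length => x i) =
      (·.flatMap f)^[k] [x 0] := by
  set W := (·.flatMap f)^[k] [x 0]
  set P := List.ofFn fun i : Fin W.length => x i
  have hhead : ∀ N, 0 < N → [x 0] <+: List.ofFn fun i : Fin N => x i := by
    rintro (_ | N) hN
    · omega
    · simp [List.ofFn_succ]
  have hP : P <+: (·.flatMap f)^[k] P := (hfix _).self_iterate_flatMap f k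
  have hW : W <+: (·.flatMap f)^[k] P :=
    (hhead _ (List.length_pos_iff.2 hk)).iterate_flatMap f k
  exact (List.prefix_of_prefix_length_le hP hW (by simp [P])).eq_of_length (by simp [P])

theorem exists_prefix_drop_flatMap {f : α → List β} {w : List β} {m : ℕ} (hm : 0 < m) :
    ∀ l : List α, (∀ a ∈ l, w <:+: f a ∧ (f a).length ≤ m) →
      ∀ n, n + 2 * m ≤ (l.flatMap f).length →
        ∃ t, n ≤ t ∧ t + w.length ≤ n + 2 * m ∧ w <+: (l.flatMap f).drop t
  | [], _, n, hn => by simp at hn; omega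
  | a :: l, hf, n, hn => by
    have ha := (hf a List.mem_cons_self).2
    rw [List.flatMap_cons, List.length_append] at hn
    by_cases han : (f a).length ≤ n
    · obtain ⟨t, hnt, htw, ht⟩ := exists_prefix_drop_flatMap hm l
        (fun b hb => hf b (List.mem_cons_of_mem a hb)) (n - (f a).length) (by omega)
      refine ⟨(f a).length + t, by omega, by omega, ?_⟩
      rwa [List.flatMap_cons, ← List.drop_drop, List.drop_append_length]
    · cases l with
      | nil => simp at hn; omega
      | cons b l =>
        obtain ⟨⟨s, u, hsu⟩, hb⟩ := hf b (by simp)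
        have hlen : s.length + w.length ≤ (f b).length := by
          simp [← hsu]
        refine ⟨(f a).length + s.length, by omega, by omega, ?_⟩
        rw [List.flatMap_cons, List.flatMap_cons, ← List.drop_drop, List.drop_append_length,
          ← hsu, List.append_assoc, List.append_assoc, List.drop_append_length]
        exact List.prefix_append _ _

end Substitution

def chaconWord (k : ℕ) : List ℕ := (·.flatMap chacon)^[k] [1]

theorem mem_Icc_of_mem_chacon {a b : ℕ} (hb : b ∈ chacon a) : b ∈ Set.Icc 1 3 := by
  unfold chacon at hb
  split_ifs at hb <;> simp only [List.mem_cons, List.not_mem_nil, or_false] at hb <;>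
    simp only [Set.mem_Icc] <;> omega

theorem mem_Icc_of_mem_chaconWord {k b : ℕ} (hb : b ∈ chaconWord k) : b ∈ Set.Icc 1 3 := by
  cases k with
  | zero => simp_all [chaconWord]
  | succ k =>
    rw [chaconWord, Function.iterate_succ_apply', List.mem_flatMap] at hb
    obtain ⟨a, -, hb⟩ := hb
    exact mem_Icc_of_mem_chacon hb

theorem two_mul_length_le_length_flatMap_chacon :
    ∀ l : List ℕ, (∀ a ∈ l, a ∈ Set.Icc 1 3) → 2 * l.length ≤ (l.flatMap chacon).length
  | [], _ => by simp
  | a :: l, hl => by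
    have ha : 2 ≤ (chacon a).length := by
      obtain ⟨h1, h3⟩ := hl a List.mem_cons_self
      interval_cases a <;> decide
    have := two_mul_length_le_length_flatMap_chacon l fun b hb => hl b (List.mem_cons_of_mem a hb)
    simp only [List.flatMap_cons, List.length_append, List.length_cons]
    omega

theorem lt_length_chaconWord (k : ℕ) : k < (chaconWord k).length := by
  induction k with
  | zero => decide
  | succ k ih =>
    have := two_mul_length_le_length_flatMap_chacon (chaconWord k) fun _ =>
      mem_Icc_of_mem_chaconWord
    rw [chaconWord, Function.iterate_succ_apply']
    exact lt_of_lt_of_le (by omega) this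

theorem chaconWord_add_two (k : ℕ) :
    chaconWord (k + 2) = (chaconWord k).flatMap fun a => (chacon a).flatMap chacon := by
  rw [← List.flatMap_assoc]
  simp only [chaconWord, Function.iterate_succ_apply']

namespace ChaconFixedPoint

variable {x : ℕ → ℕ} (hx0 : x 0 = 1)
  (hfix : ∀ N : ℕ,
      (List.ofFn fun i : Fin N => x i) <+: (List.ofFn fun i : Fin N => x i).flatMap chacon)
include hx0 hfix

theorem eq_getElem_chaconWord (k n : ℕ) (hn : n < (chaconWord k).length) :
    x n = (chaconWord k)[n] := by
  have hk : chaconWord k ≠ [] :=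
    List.ne_nil_of_length_pos (Nat.zero_lt_of_lt (lt_length_chaconWord k))
  have h := ofFn_eq_iterate_flatMap chacon hfix (k := k) (by rwa [hx0])
  rw [hx0] at h
  unfold chaconWord at hn ⊢
  rw [List.getElem_of_eq h.symm hn, List.getElem_ofFn]

theorem finite_range : (Set.range x).Finite := by
  refine (Set.finite_Icc 1 3).subset ?_
  rintro _ ⟨n, rfl⟩
  have hn := lt_length_chaconWord (n + 1)
  rw [eq_getElem_chaconWord hx0 hfix (n + 1) n (by omega)]
  exact mem_Icc_of_mem_chaconWord (List.getElem_mem _)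

/-- `x` is a concatenation of the blocks `σ²(1) = 12312`, `σ²(2) = 331212312` and
`σ²(3) = 3312331212312`, each of length at most `13` and containing `23`. -/
theorem exists_occursAt_two_three (n : ℕ) :
    ∃ t, n < t ∧ t ≤ n + 25 ∧ OccursAt x [2, 3] t := by
  set k := n + 25
  have hblocks : ∀ a ∈ chaconWord k, [2, 3] <:+: (chacon a).flatMap chacon ∧
      ((chacon a).flatMap chacon).length ≤ 13 := by
    intro a ha
    obtain ⟨h1, h3⟩ := mem_Icc_of_mem_chaconWord ha
    interval_cases a <;> decide
  have hlen := lt_length_chaconWord (k + 2)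
  rw [chaconWord_add_two] at hlen
  obtain ⟨t, hnt, htn, ht⟩ :=
    exists_prefix_drop_flatMap (by norm_num) _ hblocks (n + 1) (by omega)
  rw [← chaconWord_add_two] at ht hlen
  simp only [List.length_cons, List.length_nil] at htn
  exact ⟨t, hnt, by omega,
    (occursAt_iff_prefix_drop (eq_getElem_chaconWord hx0 hfix (k + 2)) (by simp; omega)).2 ht⟩

end ChaconFixedPoint

open ChaconFixedPoint

/-- for the fixed point `x` of the recoded Chacon substitution
(characterized by `x 0 = 1` and every prefix of `x` being a prefix of its image
under the substitution), the four words `231, 2331, 23121, 233121` are return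
words over `23`; in particular there are more than `3` return words over `23`. -/
theorem chacon_fixed_point_more_than_three_return_words
    (x : ℕ → ℕ) (hx0 : x 0 = 1)
    (hfix : ∀ N : ℕ,
      (List.ofFn fun i : Fin N => x i) <+:
        (List.ofFn fun i : Fin N => x i).flatMap chacon) :
    {[2, 3, 1], [2, 3, 3, 1], [2, 3, 1, 2, 1], [2, 3, 3, 1, 2, 1]}
        ⊆ ReturnWords x [2, 3] ∧
      3 < (ReturnWords x [2, 3]).ncard := by
  have hW := eq_getElem_chaconWord hx0 hfix 4
  have hsub : {[2, 3, 1], [2, 3, 3, 1], [2, 3, 1, 2, 1], [2, 3, 3, 1, 2, 1]}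
      ⊆ ReturnWords x [2, 3] := by
    rintro r (rfl | rfl | rfl | rfl)
    exacts [mem_returnWords_of_agree hW 1 4 (by decide),
      mem_returnWords_of_agree hW 13 17 (by decide),
      mem_returnWords_of_agree hW 23 28 (by decide),
      mem_returnWords_of_agree hW 4 10 (by decide)]
  have hfin := finite_returnWords (finite_range hx0 hfix)
    (exists_occursAt_two_three hx0 hfix)
  have hcard : ({[2, 3, 1], [2, 3, 3, 1], [2, 3, 1, 2, 1], [2, 3, 3, 1, 2, 1]} :
      Set (List ℕ)).ncard = 4 := by
    simp [Set.ncard_insert_of_notMem, Set.ncard_singleton]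
  have := Set.ncard_le_ncard hsub hfin
  exact ⟨hsub, by omega⟩
end

section
/- Let T be a regular interval exchange on k intervals with endpoint set X^{(1)} = {0 = a_1 < a_2 < ⋯ < a_{k+1} = 1}. For every n ≥ 1, the set X^{(n)} = X^{(1)} ∪ T^{−1}X^{(1)} ∪ ⋯ ∪ T^{−n+1}X^{(1)} has exactly n(k−1) + 2 elements, and the endpoints of every interval I_w associated to a factor w of length n of the coding belong to X^{(n)}. -/
open Set

/-- Left endpoint of the `i`-th interval: `∑_{j<i} λ_j`. -/
noncomputable def leftPt {k : ℕ} (lam : Fin k → ℝ) (i : Fin k) : ℝ :=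
  ∑ j ∈ Finset.univ.filter (fun j => j < i), lam j

/-- The `i`-th exchanged interval `X_i = [∑_{j<i} λ_j, ∑_{j≤i} λ_j)`. -/
def Xint {k : ℕ} (lam : Fin k → ℝ) (i : Fin k) : Set ℝ :=
  Set.Ico (leftPt lam i) (leftPt lam i + lam i)

/-- The translation amount `a_i = ∑_{ℓ<σ⁻¹(i)} λ_{σ(ℓ)} − ∑_{ℓ<i} λ_ℓ`. -/
noncomputable def transAmt {k : ℕ} (lam : Fin k → ℝ) (σ : Equiv.Perm (Fin k)) (i : Fin k) : ℝ :=
  (∑ j ∈ Finset.univ.filter (fun j => j < σ.symm i), lam (σ j)) - leftPt lam i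

/-- `T` is the interval exchange transformation on `[0,1)` with data `(lam, σ)`
(extended by the identity outside `[0,1)`). -/
def IsIET {k : ℕ} (lam : Fin k → ℝ) (σ : Equiv.Perm (Fin k)) (T : ℝ → ℝ) : Prop :=
  (∀ i, 0 < lam i) ∧ (∑ i, lam i = 1) ∧
  (∀ i, ∀ x ∈ Xint lam i, T x = x + transAmt lam σ i) ∧
  (∀ x, x ∉ Set.Ico (0:ℝ) 1 → T x = x)

/-- Keane's regularity condition: `T^n a_i = a_j` for interior endpoints forces `n = 0, i = j`
(stated symmetrically in `i, j`, which covers negative powers of the bijection `T`). -/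
def KeaneRegular {k : ℕ} (lam : Fin k → ℝ) (T : ℝ → ℝ) : Prop :=
  ∀ n : ℕ, ∀ i j : Fin k, (i : ℕ) ≠ 0 → (j : ℕ) ≠ 0 →
    T^[n] (leftPt lam i) = leftPt lam j → n = 0 ∧ i = j

/-- `U` is the symbolic coding of the `T`-orbit of `x`: `U n = i` iff `T^n x ∈ X_i`. -/
def IsCoding {k : ℕ} (lam : Fin k → ℝ) (T : ℝ → ℝ) (x : ℝ) (U : ℕ → Fin k) : Prop :=
  ∀ n, T^[n] x ∈ Xint lam (U n)

/-!
The cylinder `I_w` of a word of length `n + 1` is `X_{w₀} ∩ T⁻¹ I_{w'}`, where `w'` is `w`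
without its first letter. Since `T` is a translation on `X_{w₀}`, this is again a half-open
interval, each of whose endpoints is an endpoint of `X_{w₀}` or a `T`-preimage of an endpoint of
`I_{w'}`; induction on `n` puts them in `X⁽ⁿ⁾`.

For the count, `T` is a bijection fixing `1`, and the only point sent to `0` is a left endpoint
`a_i`, so `X⁽ⁿ⁾` is `{0, 1}` together with the preimages `T^{-j} a_i`, `j < n`, of the `k - 1`
interior endpoints. Keane's condition makes these `n (k - 1)` points distinct and different
from `0`; they differ from `1` because `1` is fixed.
-/

open Function

section IterPreimageUnion

variable {α : Type*}

def iterPreimageUnion (f : α → α) (s : Set α) (n : ℕ) : Set α :=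
  ⋃ j ∈ Finset.range n, f^[j] ⁻¹' s

variable {f : α → α} {s : Set α} {n : ℕ}

@[simp]
lemma mem_iterPreimageUnion {y : α} : y ∈ iterPreimageUnion f s n ↔ ∃ j < n, f^[j] y ∈ s := by
  simp [iterPreimageUnion]

lemma iterPreimageUnion_succ :
    iterPreimageUnion f s (n + 1) = s ∪ f ⁻¹' iterPreimageUnion f s n := by
  ext y
  simp only [mem_iterPreimageUnion, Set.mem_union, Set.mem_preimage, ← iterate_succ_apply]
  constructor
  · rintro ⟨_ | j, hj, hy⟩
    · exact Or.inl hy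
    · exact Or.inr ⟨j, by omega, hy⟩
  · rintro (hy | ⟨j, hj, hy⟩)
    · exact ⟨0, n.succ_pos, hy⟩
    · exact ⟨j + 1, by omega, hy⟩

lemma iterPreimageUnion_mono {m : ℕ} (h : m ≤ n) :
    iterPreimageUnion f s m ⊆ iterPreimageUnion f s n :=
  Set.biUnion_subset_biUnion_left (by simpa using h)

lemma iterPreimageUnion_finite (hf : Injective f) (hs : s.Finite) (n : ℕ) :
    (iterPreimageUnion f s n).Finite :=
  (Finset.range n).finite_toSet.biUnion fun j _ => hs.preimage (hf.iterate j).injOn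

lemma iterate_preimage_singleton_subset {p : α} (h : f ⁻¹' {p} ⊆ insert p s) (j : ℕ) :
    f^[j] ⁻¹' {p} ⊆ insert p (iterPreimageUnion f s j) := by
  induction j with
  | zero => simp
  | succ j ih =>
    rw [iterate_succ, Set.preimage_comp, iterPreimageUnion_succ]
    calc f ⁻¹' (f^[j] ⁻¹' {p})
        ⊆ f ⁻¹' insert p (iterPreimageUnion f s j) := Set.preimage_mono ih
      _ = f ⁻¹' {p} ∪ f ⁻¹' iterPreimageUnion f s j := by
        rw [Set.insert_eq, Set.preimage_union]
      _ ⊆ insert p (s ∪ f ⁻¹' iterPreimageUnion f s j) := by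
        rw [← Set.insert_union]
        exact Set.union_subset_union_left _ h

lemma ncard_iterPreimageUnion (hf : Bijective f) (hs : s.Finite)
    (hkeane : ∀ m, ∀ a ∈ s, f^[m] a ∈ s → m = 0) (n : ℕ) :
    (iterPreimageUnion f s n).ncard = n * s.ncard := by
  induction n with
  | zero => simp [iterPreimageUnion]
  | succ n ih =>
    have hsplit : iterPreimageUnion f s (n + 1) = iterPreimageUnion f s n ∪ f^[n] ⁻¹' s := by
      rw [iterPreimageUnion, Finset.range_add_one, Finset.set_biUnion_insert, Set.union_comm]
      rfl
    have hdisj : Disjoint (iterPreimageUnion f s n) (f^[n] ⁻¹' s) := by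
      refine Set.disjoint_left.2 fun y hy hy' => ?_
      obtain ⟨j, hj, hjy⟩ := mem_iterPreimageUnion.1 hy
      have : f^[n - j] (f^[j] y) ∈ s := by
        rwa [← iterate_add_apply, Nat.sub_add_cancel hj.le]
      have := hkeane _ _ hjy this
      omega
    rw [hsplit, Set.ncard_union_eq hdisj (iterPreimageUnion_finite hf.injective hs n)
      (hs.preimage (hf.iterate n).injective.injOn), ih,
      Set.ncard_preimage_of_injective_subset_range (hf.iterate n).injective
        (by simp [(hf.iterate n).surjective.range_eq]), add_one_mul]

end IterPreimageUnion

variable {k : ℕ}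

/-- `leftPt` extended to all `m : ℕ`, so that the `X_i` are the consecutive intervals
`Ico (f m) (f (m + 1))` of a monotone sequence `f`. -/
noncomputable def partialSum (lam : Fin k → ℝ) (m : ℕ) : ℝ :=
  ∑ j ∈ Finset.univ.filter (fun j : Fin k => (j : ℕ) < m), lam j

lemma leftPt_eq_partialSum (lam : Fin k → ℝ) (i : Fin k) : leftPt lam i = partialSum lam i :=
  rfl

lemma partialSum_zero (lam : Fin k → ℝ) : partialSum lam 0 = 0 := by
  simp [partialSum]

lemma partialSum_of_le (lam : Fin k → ℝ) {m : ℕ} (h : k ≤ m) :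
    partialSum lam m = ∑ j, lam j := by
  rw [partialSum, Finset.filter_true_of_mem fun j _ => j.isLt.trans_le h]

lemma partialSum_succ (lam : Fin k → ℝ) (i : Fin k) :
    partialSum lam (i + 1) = partialSum lam i + lam i := by
  have : Finset.univ.filter (fun j : Fin k => (j : ℕ) < i + 1)
      = insert i (Finset.univ.filter fun j : Fin k => (j : ℕ) < i) := by
    ext j
    simp only [Finset.mem_filter, Finset.mem_univ, true_and, Finset.mem_insert, Fin.ext_iff]
    omega
  rw [partialSum, this, Finset.sum_insert (by simp), add_comm]
  rfl

lemma partialSum_mono {lam : Fin k → ℝ} (hpos : ∀ i, 0 < lam i) : Monotone (partialSum lam) :=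
  fun _ _ hmn => Finset.sum_le_sum_of_subset_of_nonneg
    (Finset.monotone_filter_right _ fun _ _ h => h.trans_le hmn) fun j _ _ => (hpos j).le

lemma Xint_eq_Ico (lam : Fin k → ℝ) (i : Fin k) :
    Xint lam i = Set.Ico (partialSum lam i) (partialSum lam (i + 1)) := by
  rw [Xint, partialSum_succ]
  rfl

lemma Xint_subset_Ico {lam : Fin k → ℝ} (hpos : ∀ i, 0 < lam i) (hsum : ∑ i, lam i = 1)
    (i : Fin k) : Xint lam i ⊆ Set.Ico 0 1 := by
  rw [Xint_eq_Ico, ← partialSum_zero lam, ← hsum, ← partialSum_of_le lam le_rfl]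
  exact Set.Ico_subset_Ico (partialSum_mono hpos (Nat.zero_le _)) (partialSum_mono hpos i.isLt)

lemma eq_of_mem_Xint {lam : Fin k → ℝ} (hpos : ∀ i, 0 < lam i) {x : ℝ} {i j : Fin k}
    (hi : x ∈ Xint lam i) (hj : x ∈ Xint lam j) : i = j := by
  by_contra hne
  have := (partialSum_mono hpos).pairwise_disjoint_on_Ico_succ (Fin.val_ne_of_ne hne)
  simp only [Order.succ_eq_add_one, onFun] at this
  rw [Xint_eq_Ico] at hi hj
  exact this.notMem_of_mem_left hi hj

lemma exists_mem_Xint {lam : Fin k → ℝ} (hsum : ∑ i, lam i = 1) {x : ℝ}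
    (hx : x ∈ Set.Ico 0 1) : ∃ i, x ∈ Xint lam i := by
  rw [← partialSum_zero lam, ← hsum, ← partialSum_of_le lam le_rfl] at hx
  obtain ⟨i, hi, hx⟩ := Set.mem_iUnion₂.1 (Ico_subset_biUnion_Ico k (partialSum lam) hx)
  exact ⟨⟨i, Finset.mem_range.1 hi⟩, by rwa [Xint_eq_Ico]⟩

def endpoints (lam : Fin k → ℝ) : Set ℝ := Set.range (leftPt lam) ∪ {1}

def interiorEndpoints (lam : Fin k → ℝ) : Set ℝ := leftPt lam '' {i | (i : ℕ) ≠ 0}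

lemma leftPt_zero (lam : Fin k → ℝ) {i : Fin k} (hi : (i : ℕ) = 0) : leftPt lam i = 0 := by
  rw [leftPt_eq_partialSum, hi, partialSum_zero]

lemma leftPt_pos {lam : Fin k → ℝ} (hpos : ∀ i, 0 < lam i) {i : Fin k}
    (hi : (i : ℕ) ≠ 0) : 0 < leftPt lam i :=
  Finset.sum_pos (fun j _ => hpos j) ⟨⟨0, i.pos⟩, by
    simp only [Finset.mem_filter, Finset.mem_univ, true_and, Fin.lt_def]; omega⟩

lemma leftPt_mem_Xint {lam : Fin k → ℝ} (hpos : ∀ i, 0 < lam i) (i : Fin k) :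
    leftPt lam i ∈ Xint lam i :=
  ⟨le_rfl, lt_add_of_pos_right _ (hpos i)⟩

lemma leftPt_lt_one {lam : Fin k → ℝ} (hpos : ∀ i, 0 < lam i) (hsum : ∑ i, lam i = 1)
    (i : Fin k) : leftPt lam i < 1 :=
  (Xint_subset_Ico hpos hsum i (leftPt_mem_Xint hpos i)).2

lemma leftPt_add_mem_endpoints (lam : Fin k → ℝ) (hsum : ∑ i, lam i = 1) (i : Fin k) :
    leftPt lam i + lam i ∈ endpoints lam := by
  rw [leftPt_eq_partialSum, ← partialSum_succ]
  rcases (Nat.succ_le_of_lt i.isLt).lt_or_eq with h | h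
  · exact Or.inl ⟨⟨i + 1, h⟩, rfl⟩
  · exact Or.inr (by rw [partialSum_of_le lam h.ge, hsum]; rfl)

lemma transAmt_eq (lam : Fin k → ℝ) (σ : Equiv.Perm (Fin k)) (i : Fin k) :
    transAmt lam σ i = leftPt (lam ∘ σ) (σ.symm i) - leftPt lam i :=
  rfl

lemma add_transAmt_mem_Xint_iff (lam : Fin k → ℝ) (σ : Equiv.Perm (Fin k)) (i : Fin k)
    (y : ℝ) : y + transAmt lam σ i ∈ Xint (lam ∘ σ) (σ.symm i) ↔ y ∈ Xint lam i := by
  have hlen : (lam ∘ σ) (σ.symm i) = lam i := by simp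
  simp only [Xint, transAmt_eq, Set.mem_Ico, hlen]
  constructor <;> rintro ⟨h₁, h₂⟩ <;> constructor <;> linarith

namespace KeaneRegular

variable {lam : Fin k → ℝ} {T : ℝ → ℝ}

lemma eq_zero_of_iterate_mem (hreg : KeaneRegular lam T) {m : ℕ} {a : ℝ}
    (ha : a ∈ interiorEndpoints lam) (hm : T^[m] a ∈ interiorEndpoints lam) : m = 0 := by
  obtain ⟨i, hi, rfl⟩ := ha
  obtain ⟨j, hj, hij⟩ := hm
  exact (hreg m i j hi hj hij.symm).1

lemma ncard_interiorEndpoints (hreg : KeaneRegular lam T) (hk : 0 < k) :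
    (interiorEndpoints lam).ncard = k - 1 := by
  have hinj : Set.InjOn (leftPt lam) {i | (i : ℕ) ≠ 0} :=
    fun i hi j hj hij => (hreg 0 i j hi hj hij).2
  have hcompl : {i : Fin k | (i : ℕ) ≠ 0} = {⟨0, hk⟩}ᶜ := by
    ext i
    simp [Fin.ext_iff]
  rw [interiorEndpoints, hinj.ncard_image, hcompl, Set.ncard_compl]
  simp

end KeaneRegular

def cylinder (T : ℝ → ℝ) (lam : Fin k → ℝ) {n : ℕ} (w : Fin n → Fin k) : Set ℝ :=
  ⋂ i : Fin n, T^[i] ⁻¹' Xint lam (w i)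

lemma cylinder_succ (T : ℝ → ℝ) (lam : Fin k → ℝ) {n : ℕ} (w : Fin (n + 1) → Fin k) :
    cylinder T lam w = Xint lam (w 0) ∩ T ⁻¹' cylinder T lam (Fin.tail w) := by
  ext y
  simp [cylinder, Fin.forall_fin_succ, Fin.tail, iterate_succ_apply]

lemma IsCoding.iterate_mem_cylinder {lam : Fin k → ℝ} {T : ℝ → ℝ} {x : ℝ} {U : ℕ → Fin k}
    (hU : IsCoding lam T x U) {n p : ℕ} {w : Fin n → Fin k}
    (hp : OccursAt U (List.ofFn w) p) : T^[p] x ∈ cylinder T lam w := by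
  refine Set.mem_iInter.2 fun i => ?_
  have hUw : U (p + i) = w i := by simpa using hp ⟨i, by simp⟩
  rw [Set.mem_preimage, ← iterate_add_apply, add_comm, ← hUw]
  exact hU _

namespace IsIET

variable {lam : Fin k → ℝ} {σ : Equiv.Perm (Fin k)} {T : ℝ → ℝ}

lemma card_pos (hT : IsIET lam σ T) : 0 < k := by
  by_contra! hk
  obtain rfl : k = 0 := by omega
  simpa using hT.2.1

lemma pos_comp (hT : IsIET lam σ T) (i : Fin k) : 0 < (lam ∘ σ) i := hT.1 (σ i)

lemma sum_comp (hT : IsIET lam σ T) : ∑ i, (lam ∘ σ) i = 1 :=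
  (Equiv.sum_comp σ lam).trans hT.2.1

lemma apply_mem_Xint (hT : IsIET lam σ T) {x : ℝ} {i : Fin k} (hx : x ∈ Xint lam i) :
    T x ∈ Xint (lam ∘ σ) (σ.symm i) := by
  rwa [hT.2.2.1 i x hx, add_transAmt_mem_Xint_iff]

lemma apply_leftPt (hT : IsIET lam σ T) (i : Fin k) :
    T (leftPt lam i) = leftPt (lam ∘ σ) (σ.symm i) := by
  rw [hT.2.2.1 i _ (leftPt_mem_Xint hT.1 i), transAmt_eq, add_sub_cancel]

lemma apply_leftPt_eq_zero (hT : IsIET lam σ T) :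
    T (leftPt lam (σ ⟨0, hT.card_pos⟩)) = 0 := by
  rw [hT.apply_leftPt, Equiv.symm_apply_apply, leftPt_zero _ rfl]

lemma apply_one (hT : IsIET lam σ T) : T 1 = 1 :=
  hT.2.2.2 1 (by simp)

lemma apply_mem_Ico_iff (hT : IsIET lam σ T) {x : ℝ} :
    T x ∈ Set.Ico 0 1 ↔ x ∈ Set.Ico 0 1 := by
  refine ⟨fun h => by_contra fun hx => hx (hT.2.2.2 x hx ▸ h), fun hx => ?_⟩
  obtain ⟨i, hi⟩ := exists_mem_Xint hT.2.1 hx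
  exact Xint_subset_Ico hT.pos_comp hT.sum_comp _ (hT.apply_mem_Xint hi)

lemma injective (hT : IsIET lam σ T) : Injective T := by
  intro x y hxy
  have hIco : x ∈ Set.Ico 0 1 ↔ y ∈ Set.Ico 0 1 := by
    rw [← hT.apply_mem_Ico_iff, hxy, hT.apply_mem_Ico_iff]
  by_cases hx : x ∈ Set.Ico 0 1
  · obtain ⟨i, hi⟩ := exists_mem_Xint hT.2.1 hx
    obtain ⟨j, hj⟩ := exists_mem_Xint hT.2.1 (hIco.1 hx)
    obtain rfl : i = j := σ.symm.injective <|
      eq_of_mem_Xint hT.pos_comp (hT.apply_mem_Xint hi) (hxy ▸ hT.apply_mem_Xint hj)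
    simpa [hT.2.2.1 i x hi, hT.2.2.1 i y hj] using hxy
  · rwa [hT.2.2.2 x hx, hT.2.2.2 y (mt hIco.2 hx)] at hxy

lemma surjective (hT : IsIET lam σ T) : Surjective T := by
  intro y
  by_cases hy : y ∈ Set.Ico 0 1
  · obtain ⟨p, hp⟩ := exists_mem_Xint hT.sum_comp hy
    have hx : y - transAmt lam σ (σ p) ∈ Xint lam (σ p) := by
      rwa [← add_transAmt_mem_Xint_iff, sub_add_cancel, Equiv.symm_apply_apply]
    exact ⟨_, by rw [hT.2.2.1 _ _ hx, sub_add_cancel]⟩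
  · exact ⟨y, hT.2.2.2 y hy⟩

lemma bijective (hT : IsIET lam σ T) : Bijective T := ⟨hT.injective, hT.surjective⟩

lemma eq_one_of_iterate_eq_one (hT : IsIET lam σ T) {j : ℕ} {y : ℝ} (hy : T^[j] y = 1) :
    y = 1 :=
  hT.injective.iterate j (hy.trans (iterate_fixed hT.apply_one j).symm)

lemma preimage_zero_subset (hT : IsIET lam σ T) :
    T ⁻¹' {0} ⊆ insert 0 (interiorEndpoints lam) := by
  intro y hy
  obtain rfl := hT.injective (hy.trans hT.apply_leftPt_eq_zero.symm)
  by_cases h : ((σ ⟨0, hT.card_pos⟩ : Fin k) : ℕ) = 0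
  · exact Or.inl (leftPt_zero lam h)
  · exact Or.inr ⟨_, h, rfl⟩

lemma iterate_zero_notMem_interiorEndpoints (hT : IsIET lam σ T) (hreg : KeaneRegular lam T)
    (j : ℕ) : T^[j] 0 ∉ interiorEndpoints lam := by
  rintro ⟨i, hi, h⟩
  set p : Fin k := σ ⟨0, hT.card_pos⟩
  have hp0 : T (leftPt lam p) = 0 := hT.apply_leftPt_eq_zero
  by_cases hp : (p : ℕ) = 0
  · rw [leftPt_zero lam hp] at hp0
    rw [iterate_fixed hp0] at h
    exact (leftPt_pos hT.1 hi).ne' h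
  · have : T^[j + 1] (leftPt lam p) = leftPt lam i := by
      rw [iterate_succ_apply, hp0, h]
    exact j.succ_ne_zero (hreg _ p i hp hi this).1

lemma iterPreimageUnion_endpoints_eq (hT : IsIET lam σ T) {n : ℕ} (hn : 1 ≤ n) :
    iterPreimageUnion T (endpoints lam) n
      = insert 1 (insert 0 (iterPreimageUnion T (interiorEndpoints lam) n)) := by
  ext y
  constructor
  · intro hy
    obtain ⟨j, hj, ⟨i, hi⟩ | h1⟩ := mem_iterPreimageUnion.1 hy
    · by_cases h0 : (i : ℕ) = 0
      · have hy0 : y ∈ T^[j] ⁻¹' {0} := by simp [← hi, leftPt_zero lam h0]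
        exact Or.inr (Set.insert_subset_insert (iterPreimageUnion_mono hj.le)
          (iterate_preimage_singleton_subset hT.preimage_zero_subset j hy0))
      · exact Or.inr (Or.inr (mem_iterPreimageUnion.2 ⟨j, hj, i, h0, hi⟩))
    · exact Or.inl (hT.eq_one_of_iterate_eq_one h1)
  · rintro (rfl | rfl | hy)
    · exact mem_iterPreimageUnion.2 ⟨0, hn, Or.inr rfl⟩
    · exact mem_iterPreimageUnion.2
        ⟨0, hn, Or.inl ⟨⟨0, hT.card_pos⟩, leftPt_zero lam rfl⟩⟩
    · obtain ⟨j, hj, i, -, hi⟩ := mem_iterPreimageUnion.1 hy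
      exact mem_iterPreimageUnion.2 ⟨j, hj, Or.inl ⟨i, hi⟩⟩

lemma ncard_iterPreimageUnion_endpoints (hT : IsIET lam σ T) (hreg : KeaneRegular lam T)
    {n : ℕ} (hn : 1 ≤ n) :
    (iterPreimageUnion T (endpoints lam) n).ncard = n * (k - 1) + 2 := by
  have hfin : (interiorEndpoints lam).Finite := Set.toFinite (leftPt lam '' _)
  have hfin' := iterPreimageUnion_finite hT.injective hfin n
  have hzero : 0 ∉ iterPreimageUnion T (interiorEndpoints lam) n := by
    intro h
    obtain ⟨j, -, hj⟩ := mem_iterPreimageUnion.1 h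
    exact hT.iterate_zero_notMem_interiorEndpoints hreg j hj
  have hone : 1 ∉ insert 0 (iterPreimageUnion T (interiorEndpoints lam) n) := by
    rintro (h | h)
    · exact one_ne_zero h
    obtain ⟨j, -, i, -, hij⟩ := mem_iterPreimageUnion.1 h
    rw [iterate_fixed hT.apply_one] at hij
    exact (leftPt_lt_one hT.1 hT.2.1 i).ne hij
  rw [hT.iterPreimageUnion_endpoints_eq hn, Set.ncard_insert_of_notMem hone (hfin'.insert 0),
    Set.ncard_insert_of_notMem hzero hfin',
    ncard_iterPreimageUnion hT.bijective hfin (fun _ _ => hreg.eq_zero_of_iterate_mem),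
    hreg.ncard_interiorEndpoints hT.card_pos]

lemma Xint_inter_preimage_Ico (hT : IsIET lam σ T) (a : Fin k) {α β : ℝ}
    (hne : (Xint lam a ∩ T ⁻¹' Set.Ico α β).Nonempty) :
    ∃ α' β', Xint lam a ∩ T ⁻¹' Set.Ico α β = Set.Ico α' β' ∧
      (α' ∈ endpoints lam ∨ T α' = α) ∧ (β' ∈ endpoints lam ∨ T β' = β) := by
  set t := transAmt lam σ a
  have hT_a : ∀ y ∈ Xint lam a, T y = y + t := hT.2.2.1 a
  have hIco : Xint lam a ∩ T ⁻¹' Set.Ico α β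
      = Set.Ico (max (leftPt lam a) (α - t)) (min (leftPt lam a + lam a) (β - t)) := by
    ext y
    simp only [Set.mem_inter_iff, Set.mem_preimage, Set.mem_Ico, max_le_iff, lt_min_iff]
    constructor
    · rintro ⟨hy, hTy⟩
      rw [hT_a y hy] at hTy
      exact ⟨⟨hy.1, by linarith [hTy.1]⟩, hy.2, by linarith [hTy.2]⟩
    · rintro ⟨⟨h₁, h₂⟩, h₃, h₄⟩
      refine ⟨⟨h₁, h₃⟩, ?_⟩
      rw [hT_a y ⟨h₁, h₃⟩]
      constructor <;> linarith
  have hlt := Set.nonempty_Ico.1 (hIco ▸ hne)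
  refine ⟨_, _, hIco, ?_, ?_⟩
  · rcases max_cases (leftPt lam a) (α - t) with ⟨h, -⟩ | ⟨h, hα⟩
    · rw [h]
      exact Or.inl (Or.inl ⟨a, rfl⟩)
    · rw [h] at hlt ⊢
      exact Or.inr (by rw [hT_a _ ⟨hα.le, hlt.trans_le (min_le_left _ _)⟩, sub_add_cancel])
  · rcases min_cases (leftPt lam a + lam a) (β - t) with ⟨h, -⟩ | ⟨h, hβ⟩
    · rw [h]
      exact Or.inl (leftPt_add_mem_endpoints lam hT.2.1 a)
    · rw [h] at hlt ⊢
      exact Or.inr (by rw [hT_a _ ⟨(le_max_left _ _).trans hlt.le, hβ⟩, sub_add_cancel])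

lemma cylinder_eq_Ico (hT : IsIET lam σ T) {n : ℕ} (w : Fin (n + 1) → Fin k)
    (hne : (cylinder T lam w).Nonempty) :
    ∃ α ∈ iterPreimageUnion T (endpoints lam) (n + 1),
      ∃ β ∈ iterPreimageUnion T (endpoints lam) (n + 1), cylinder T lam w = Set.Ico α β := by
  induction n with
  | zero =>
    refine ⟨leftPt lam (w 0), mem_iterPreimageUnion.2 ⟨0, one_pos, Or.inl ⟨w 0, rfl⟩⟩,
      leftPt lam (w 0) + lam (w 0),
      mem_iterPreimageUnion.2 ⟨0, one_pos, leftPt_add_mem_endpoints lam hT.2.1 (w 0)⟩, ?_⟩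
    rw [cylinder_succ, cylinder, Set.iInter_of_empty, Set.preimage_univ, Set.inter_univ, Xint]
  | succ n ih =>
    rw [cylinder_succ] at hne ⊢
    obtain ⟨α, hα, β, hβ, heq⟩ :=
      ih (Fin.tail w) ((hne.image T).mono (Set.image_subset_iff.2 Set.inter_subset_right))
    rw [heq] at hne ⊢
    obtain ⟨α', β', heq', hα', hβ'⟩ := hT.Xint_inter_preimage_Ico (w 0) hne
    rw [iterPreimageUnion_succ]
    exact ⟨α', hα'.imp_right fun h => show T α' ∈ _ from h ▸ hα,
      β', hβ'.imp_right fun h => show T β' ∈ _ from h ▸ hβ, heq'⟩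

end IsIET

theorem endpoints_of_cylinders_and_card_of_preimage_partition_general
    (k : ℕ) (lam : Fin k → ℝ) (σ : Equiv.Perm (Fin k)) (T : ℝ → ℝ)
    (hT : IsIET lam σ T) (hreg : KeaneRegular lam T)
    (x : ℝ)
    (U : ℕ → Fin k) (hU : IsCoding lam T x U)
    (X1 : Set ℝ) (hX1 : X1 = Set.range (leftPt lam) ∪ {1})
    (n : ℕ) (hn : 1 ≤ n)
    (Xn : Set ℝ) (hXn : Xn = ⋃ j ∈ Finset.range n, T^[j] ⁻¹' X1) :
    Xn.ncard = n * (k - 1) + 2 ∧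
      ∀ w : Fin n → Fin k, IsFactor U (List.ofFn w) →
        sInf (⋂ i : Fin n, T^[(i : ℕ)] ⁻¹' Xint lam (w i)) ∈ Xn ∧
        sSup (⋂ i : Fin n, T^[(i : ℕ)] ⁻¹' Xint lam (w i)) ∈ Xn := by
  subst hX1 hXn
  refine ⟨hT.ncard_iterPreimageUnion_endpoints hreg hn, fun w ⟨p, hp⟩ => ?_⟩
  obtain ⟨m, rfl⟩ : ∃ m, n = m + 1 := ⟨n - 1, by omega⟩
  have hne : (cylinder T lam w).Nonempty := ⟨_, hU.iterate_mem_cylinder hp⟩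
  obtain ⟨α, hα, β, hβ, heq⟩ := hT.cylinder_eq_Ico w hne
  have hαβ : α < β := Set.nonempty_Ico.1 (heq ▸ hne)
  change sInf (cylinder T lam w) ∈ _ ∧ sSup (cylinder T lam w) ∈ _
  rw [heq, csInf_Ico hαβ, csSup_Ico hαβ]
  exact ⟨hα, hβ⟩

/-- for a regular interval exchange on `k` intervals with endpoint
set `X⁽¹⁾ = {0 = a_1 < ⋯ < a_{k+1} = 1}`, the set
`X⁽ⁿ⁾ = X⁽¹⁾ ∪ T⁻¹X⁽¹⁾ ∪ ⋯ ∪ T^{-n+1}X⁽¹⁾` has exactly `n(k-1) + 2` elements,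
and the endpoints of the interval `I_w` of every factor `w` of length `n` of the
coding belong to `X⁽ⁿ⁾`. -/
theorem endpoints_of_cylinders_and_card_of_preimage_partition
    (k : ℕ) (lam : Fin k → ℝ) (σ : Equiv.Perm (Fin k)) (T : ℝ → ℝ)
    (hT : IsIET lam σ T) (hreg : KeaneRegular lam T)
    (x : ℝ) (hx : x ∈ Set.Ico (0:ℝ) 1)
    (U : ℕ → Fin k) (hU : IsCoding lam T x U)
    (X1 : Set ℝ) (hX1 : X1 = Set.range (leftPt lam) ∪ {1})
    (n : ℕ) (hn : 1 ≤ n)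
    (Xn : Set ℝ) (hXn : Xn = ⋃ j ∈ Finset.range n, T^[j] ⁻¹' X1) :
    Xn.ncard = n * (k - 1) + 2 ∧
      ∀ w : Fin n → Fin k, IsFactor U (List.ofFn w) →
        sInf (⋂ i : Fin n, T^[(i : ℕ)] ⁻¹' Xint lam (w i)) ∈ Xn ∧
        sSup (⋂ i : Fin n, T^[(i : ℕ)] ⁻¹' Xint lam (w i)) ∈ Xn :=
  endpoints_of_cylinders_and_card_of_preimage_partition_general k lam σ T hT hreg x U hU X1 hX1 n hn
    Xn hXn
end

section
/- Let T be a regular interval exchange on k intervals and w a factor of the coding, with associated interval I_w. Then the first-return map of T to the closure of I_w partitions I_w into exactly k subintervals p_1,…,p_k, on each of which the return time is constant; equivalently, the induced transformation on I_w is again an interval exchange on k intervals. -/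
open Set

/- ========================================================================
   Auxiliary development for the proof.
   ======================================================================== -/

namespace IETProof

open Set

variable {k : ℕ} {lam : Fin k → ℝ}

lemma leftPt_nonneg (hpos : ∀ i, 0 < lam i) (i : Fin k) : 0 ≤ leftPt lam i := by
  apply Finset.sum_nonneg
  intro j _
  exact (hpos j).le

lemma leftPt_add_lam_le (hpos : ∀ i, 0 < lam i) {i j : Fin k} (hij : i < j) :
    leftPt lam i + lam i ≤ leftPt lam j := by
  classical
  unfold leftPt
  have hni : i ∉ Finset.univ.filter (fun l => l < i) := by simp
  have hsub : insert i (Finset.univ.filter (fun l => l < i)) ⊆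
      Finset.univ.filter (fun l => l < j) := by
    intro l hl
    simp only [Finset.mem_insert, Finset.mem_filter, Finset.mem_univ, true_and] at hl ⊢
    rcases hl with rfl | hl
    · exact hij
    · exact lt_trans hl hij
  calc (∑ l ∈ Finset.univ.filter (fun l => l < i), lam l) + lam i
      = ∑ l ∈ insert i (Finset.univ.filter (fun l => l < i)), lam l := by
        rw [Finset.sum_insert hni]; ring
    _ ≤ ∑ l ∈ Finset.univ.filter (fun l => l < j), lam l := by
        apply Finset.sum_le_sum_of_subset_of_nonneg hsub
        intro l _ _
        exact (hpos l).le

lemma leftPt_add_lam_le_one (hpos : ∀ i, 0 < lam i) (hsum : ∑ i, lam i = 1) (i : Fin k) :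
    leftPt lam i + lam i ≤ 1 := by
  classical
  have hni : i ∉ Finset.univ.filter (fun l => l < i) := by simp
  have : leftPt lam i + lam i = ∑ l ∈ insert i (Finset.univ.filter (fun l => l < i)), lam l := by
    unfold leftPt
    rw [Finset.sum_insert hni]; ring
  rw [this, ← hsum]
  apply Finset.sum_le_sum_of_subset_of_nonneg (Finset.subset_univ _)
  intro l _ _
  exact (hpos l).le

lemma Xint_subset_Ico (hpos : ∀ i, 0 < lam i) (hsum : ∑ i, lam i = 1) (i : Fin k) :
    Xint lam i ⊆ Ico (0:ℝ) 1 := by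
  intro y hy
  obtain ⟨h1, h2⟩ := hy
  constructor
  · exact le_trans (leftPt_nonneg hpos i) h1
  · exact lt_of_lt_of_le h2 (leftPt_add_lam_le_one hpos hsum i)

lemma Xint_unique (hpos : ∀ i, 0 < lam i) {i j : Fin k} {y : ℝ}
    (hi : y ∈ Xint lam i) (hj : y ∈ Xint lam j) : i = j := by
  by_contra hij
  rcases lt_or_gt_of_ne hij with h | h
  · have := leftPt_add_lam_le hpos h
    exact absurd (lt_of_lt_of_le hi.2 this) (not_lt.2 hj.1)
  · have := leftPt_add_lam_le hpos h
    exact absurd (lt_of_lt_of_le hj.2 this) (not_lt.2 hi.1)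

lemma leftPt_mem (hpos : ∀ i, 0 < lam i) (i : Fin k) : leftPt lam i ∈ Xint lam i :=
  ⟨le_refl _, by linarith [hpos i]⟩

lemma leftPt_pos (hpos : ∀ i, 0 < lam i) {i : Fin k} (h : (i : ℕ) ≠ 0) :
    0 < leftPt lam i := by
  have hk : 0 < k := i.pos
  have h0 : (⟨0, hk⟩ : Fin k) < i := by
    rwa [Fin.lt_def, Nat.pos_iff_ne_zero]
  have := leftPt_add_lam_le hpos h0
  have h00 : leftPt lam (⟨0, hk⟩ : Fin k) = 0 := by
    unfold leftPt
    apply Finset.sum_eq_zero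
    intro j hj
    simp only [Finset.mem_filter, Finset.mem_univ, true_and] at hj
    exact absurd hj (by simp [Fin.lt_def])
  have := hpos (⟨0, hk⟩ : Fin k)
  linarith [leftPt_nonneg hpos i]

lemma leftPt_succ {i : Fin k} (h : (i : ℕ) + 1 < k) :
    leftPt lam i + lam i = leftPt lam ⟨(i:ℕ)+1, h⟩ := by
  classical
  unfold leftPt
  have : Finset.univ.filter (fun l => l < (⟨(i:ℕ)+1, h⟩ : Fin k)) =
      insert i (Finset.univ.filter (fun l => l < i)) := by
    ext l
    simp only [Finset.mem_insert, Finset.mem_filter, Finset.mem_univ, true_and, Fin.lt_def]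
    constructor
    · intro hl
      rcases Nat.lt_succ_iff_lt_or_eq.mp hl with hl | hl
      · right; exact hl
      · left; exact Fin.ext hl
    · intro hl
      rcases hl with rfl | hl
      · exact Nat.lt_succ_self _
      · exact Nat.lt_succ_of_lt hl
  rw [this, Finset.sum_insert (by simp)]
  ring

lemma leftPt_last (hsum : ∑ i, lam i = 1) {i : Fin k} (h : (i : ℕ) + 1 = k) :
    leftPt lam i + lam i = 1 := by
  classical
  have : Finset.univ.filter (fun l => l < i) = Finset.univ.erase i := by
    ext l
    simp only [Finset.mem_filter, Finset.mem_univ, true_and, Finset.mem_erase, and_true]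
    constructor
    · intro hl; exact ne_of_lt hl
    · intro hl
      rcases lt_or_ge l i with h' | h'
      · exact h'
      · exfalso
        apply hl
        apply le_antisymm ?_ h'
        rw [Fin.le_def]
        omega
  unfold leftPt
  rw [this, Finset.sum_erase_eq_sub (Finset.mem_univ i), hsum]
  ring

lemma exists_mem_Xint (hpos : ∀ i, 0 < lam i) (hsum : ∑ i, lam i = 1) {y : ℝ}
    (hy : y ∈ Ico (0:ℝ) 1) : ∃ i, y ∈ Xint lam i := by
  classical
  have hk : 0 < k := by
    by_contra hk
    push_neg at hk
    interval_cases k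
    · simp at hsum
  have h0 : leftPt lam (⟨0, hk⟩ : Fin k) = 0 := by
    unfold leftPt
    apply Finset.sum_eq_zero
    intro j hj
    simp only [Finset.mem_filter, Finset.mem_univ, true_and] at hj
    exact absurd hj (by simp [Fin.lt_def])
  set s := Finset.univ.filter (fun i : Fin k => leftPt lam i ≤ y) with hs
  have hns : s.Nonempty := ⟨⟨0, hk⟩, by simp [hs, h0, hy.1]⟩
  set i := s.max' hns with hi
  have him : i ∈ s := s.max'_mem hns
  have hiy : leftPt lam i ≤ y := by
    simpa [hs] using him
  refine ⟨i, hiy, ?_⟩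
  by_contra hcon
  push_neg at hcon
  rcases Nat.lt_or_ge ((i:ℕ)+1) k with h | h
  · have : (⟨(i:ℕ)+1, h⟩ : Fin k) ∈ s := by
      simp only [hs, Finset.mem_filter, Finset.mem_univ, true_and]
      rw [← leftPt_succ h]
      exact hcon
    have h2 := s.le_max' _ this
    rw [← hi, Fin.le_def] at h2
    have h3 : ((⟨(i:ℕ)+1, h⟩ : Fin k) : ℕ) = (i:ℕ)+1 := rfl
    omega
  · have hlast : (i:ℕ) + 1 = k := by
      have := i.2; omega
    have := leftPt_last hsum hlast
    linarith [hy.2]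


section IETMaps

variable {σ : Equiv.Perm (Fin k)} {T : ℝ → ℝ}

lemma lam_comp_pos (hpos : ∀ i, 0 < lam i) : ∀ j, 0 < (fun j => lam (σ j)) j :=
  fun j => hpos (σ j)

lemma lam_comp_sum (hsum : ∑ i, lam i = 1) : ∑ j, (fun j => lam (σ j)) j = 1 := by
  rw [Equiv.sum_comp σ lam]
  exact hsum

lemma T_mem_image (hT : IsIET lam σ T) {i : Fin k} {y : ℝ} (hy : y ∈ Xint lam i) :
    T y ∈ Xint (fun j => lam (σ j)) (σ.symm i) := by
  have hTy : T y = y + transAmt lam σ i := hT.2.2.1 i y hy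
  have hL : leftPt (fun j => lam (σ j)) (σ.symm i) =
      ∑ j ∈ Finset.univ.filter (fun j => j < σ.symm i), lam (σ j) := rfl
  have hlam : (fun j => lam (σ j)) (σ.symm i) = lam i := by simp
  constructor
  · rw [hL, hTy]
    unfold transAmt
    have := hy.1
    linarith
  · rw [hL, hlam, hTy]
    unfold transAmt
    have := hy.2
    linarith

lemma T_mapsTo (hT : IsIET lam σ T) : MapsTo T (Ico (0:ℝ) 1) (Ico (0:ℝ) 1) := by
  intro y hy
  obtain ⟨i, hi⟩ := exists_mem_Xint hT.1 hT.2.1 hy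
  exact Xint_subset_Ico (lam_comp_pos hT.1) (lam_comp_sum hT.2.1) _ (T_mem_image hT hi)

lemma T_inj (hT : IsIET lam σ T) {u v : ℝ} (hu : u ∈ Ico (0:ℝ) 1) (hv : v ∈ Ico (0:ℝ) 1)
    (h : T u = T v) : u = v := by
  obtain ⟨i, hi⟩ := exists_mem_Xint hT.1 hT.2.1 hu
  obtain ⟨j, hj⟩ := exists_mem_Xint hT.1 hT.2.1 hv
  have h1 := T_mem_image hT hi
  have h2 := T_mem_image hT hj
  rw [h] at h1
  have hsij : σ.symm i = σ.symm j := Xint_unique (lam_comp_pos hT.1) h1 h2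
  have hij : i = j := σ.symm.injective hsij
  subst hij
  have e1 : T u = u + transAmt lam σ i := hT.2.2.1 i u hi
  have e2 : T v = v + transAmt lam σ i := hT.2.2.1 i v hj
  rw [e1, e2] at h
  linarith


lemma Titer_mapsTo (hT : IsIET lam σ T) (s : ℕ) :
    MapsTo T^[s] (Ico (0:ℝ) 1) (Ico (0:ℝ) 1) := by
  induction s with
  | zero => simp [MapsTo]
  | succ m ih =>
    intro y hy
    rw [Function.iterate_succ_apply']
    exact T_mapsTo hT (ih hy)

lemma Titer_inj (hT : IsIET lam σ T) (s : ℕ) {u v : ℝ} (hu : u ∈ Ico (0:ℝ) 1)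
    (hv : v ∈ Ico (0:ℝ) 1) (h : T^[s] u = T^[s] v) : u = v := by
  induction s with
  | zero => simpa using h
  | succ m ih =>
    rw [Function.iterate_succ_apply', Function.iterate_succ_apply'] at h
    exact ih (T_inj hT (Titer_mapsTo hT m hu) (Titer_mapsTo hT m hv) h)

lemma T_cancel (hT : IsIET lam σ T) {u v : ℝ} {s₁ s₂ : ℕ} (hu : u ∈ Ico (0:ℝ) 1)
    (hv : v ∈ Ico (0:ℝ) 1) (hs : s₂ ≤ s₁) (h : T^[s₁] u = T^[s₂] v) :
    T^[s₁ - s₂] u = v := by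
  apply Titer_inj hT s₂ (Titer_mapsTo hT _ hu) hv
  rw [← Function.iterate_add_apply]
  rwa [Nat.add_sub_cancel' hs]

lemma T_eq_zero (hT : IsIET lam σ T) (hk : 0 < k) {y : ℝ} (hy : y ∈ Ico (0:ℝ) 1)
    (h : T y = 0) : y = leftPt lam (σ ⟨0, hk⟩) := by
  obtain ⟨i, hi⟩ := exists_mem_Xint hT.1 hT.2.1 hy
  have h1 := T_mem_image hT hi
  rw [h] at h1
  have hL0 : leftPt (fun j => lam (σ j)) (σ.symm i) = 0 := by
    have hn := leftPt_nonneg (lam_comp_pos hT.1 (σ := σ)) (σ.symm i)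
    have := h1.1
    linarith
  have hs0 : σ.symm i = ⟨0, hk⟩ := by
    by_contra hne
    have : ((σ.symm i : Fin k) : ℕ) ≠ 0 := by
      intro h0
      exact hne (Fin.ext h0)
    have := leftPt_pos (lam_comp_pos hT.1 (σ := σ)) this
    linarith
  have hi' : i = σ ⟨0, hk⟩ := by
    rw [← hs0]; simp
  subst hi'
  have e : T y = y + transAmt lam σ (σ ⟨0, hk⟩) := hT.2.2.1 _ y hi
  rw [h] at e
  unfold transAmt at e
  have hfil : Finset.univ.filter (fun j => j < σ.symm (σ ⟨0, hk⟩)) = ∅ := by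
    apply Finset.filter_eq_empty_iff.mpr
    intro j _
    simp only [Equiv.symm_apply_apply]
    rw [Fin.lt_def]
    show ¬ ((j:ℕ) < ((⟨0, hk⟩ : Fin k) : ℕ))
    simp
  rw [hfil] at e
  simp at e
  linarith

lemma T_leftPt_image_zero (hT : IsIET lam σ T) (hk : 0 < k) :
    T (leftPt lam (σ ⟨0, hk⟩)) = 0 := by
  have hmem := leftPt_mem hT.1 (σ ⟨0, hk⟩)
  have e : T _ = _ + transAmt lam σ (σ ⟨0, hk⟩) := hT.2.2.1 _ _ hmem
  rw [e]
  unfold transAmt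
  have hfil : Finset.univ.filter (fun j => j < σ.symm (σ ⟨0, hk⟩)) = ∅ := by
    apply Finset.filter_eq_empty_iff.mpr
    intro j _
    simp only [Equiv.symm_apply_apply]
    rw [Fin.lt_def]
    show ¬ ((j:ℕ) < ((⟨0, hk⟩ : Fin k) : ℕ))
    simp
  rw [hfil]
  simp

end IETMaps



section Cylinder

variable {σ : Equiv.Perm (Fin k)} {T : ℝ → ℝ}

lemma cylinder_structure (hT : IsIET lam σ T) {n : ℕ} (hn : 1 ≤ n) (v : ℕ → Fin k)
    (hne : ∃ y₀, ∀ s, s < n → T^[s] y₀ ∈ Xint lam (v s)) :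
    ∃ (a b : ℝ) (c : ℕ → ℝ), a < b ∧ c 0 = 0 ∧
      (∀ s, s + 1 < n → c (s+1) = c s + transAmt lam σ (v s)) ∧
      {y | ∀ s, s < n → T^[s] y ∈ Xint lam (v s)} = Ico a b ∧
      (∀ s, s < n → ∀ y ∈ Ico a b, T^[s] y = y + c s ∧ y + c s ∈ Xint lam (v s)) ∧
      (∃ q, q < n ∧ a + c q = leftPt lam (v q)) ∧
      (∃ q, q < n ∧ b + c q = leftPt lam (v q) + lam (v q) ∧
        ∀ s, s < q → b + c s ∈ Xint lam (v s)) := by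
  induction n, hn using Nat.le_induction with
  | base =>
    refine ⟨leftPt lam (v 0), leftPt lam (v 0) + lam (v 0), fun _ => 0, ?_, rfl, ?_, ?_, ?_, ?_, ?_⟩
    · linarith [hT.1 (v 0)]
    · intro s hs; omega
    · ext y
      simp only [Set.mem_setOf_eq, Nat.lt_one_iff, mem_Ico]
      constructor
      · intro h
        have := h 0 rfl
        simpa [Xint] using this
      · intro h s hs
        subst hs
        simpa [Xint] using h
    · intro s hs y hy
      interval_cases s
      simpa [Xint] using hy
    · exact ⟨0, by omega, by ring⟩
    · exact ⟨0, by omega, by ring, by omega⟩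
  | succ p hp ih =>
    obtain ⟨y₀, hy₀⟩ := hne
    have hneo : ∃ y₀, ∀ s, s < p → T^[s] y₀ ∈ Xint lam (v s) :=
      ⟨y₀, fun s hs => hy₀ s (by omega)⟩
    obtain ⟨p', rfl⟩ : ∃ p', p = p' + 1 := ⟨p - 1, by omega⟩
    obtain ⟨a, b, c, hab, hc0, hcD, hset, hrig, ⟨qa, hqa, hqaE⟩, ⟨qb, hqb, hqbE, hqbS⟩⟩ := ih hneo
    obtain ⟨cn, hcnE⟩ : ∃ x : ℝ, x = c p' + transAmt lam σ (v p') := ⟨_, rfl⟩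
    have hrigN : ∀ y ∈ Ico a b, T^[p' + 1] y = y + cn := by
      intro y hy
      have h1 := hrig p' (by omega) y hy
      have h2 : T^[p' + 1] y = T (T^[p'] y) := Function.iterate_succ_apply' T p' y
      rw [h2, h1.1, hT.2.2.1 _ _ h1.2, hcnE]
      ring
    have hsetN : {y | ∀ s, s < p' + 2 → T^[s] y ∈ Xint lam (v s)} =
        Ico (max a (leftPt lam (v (p'+1)) - cn))
            (min b (leftPt lam (v (p'+1)) + lam (v (p'+1)) - cn)) := by
      rw [← Set.Ico_inter_Ico]
      ext y
      simp only [Set.mem_setOf_eq, Set.mem_inter_iff]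
      constructor
      · intro h
        have hyold : y ∈ Ico a b := by
          rw [← hset]
          exact fun s hs => h s (by omega)
        have hm := h (p' + 1) (by omega)
        rw [hrigN y hyold] at hm
        exact ⟨hyold, by constructor <;> [linarith [hm.1]; linarith [hm.2]]⟩
      · rintro ⟨hyold, hymid⟩
        intro s hs
        rcases Nat.lt_or_ge s (p' + 1) with h' | h'
        · rw [← hset] at hyold
          exact hyold s h'
        · have hs2 : s = p' + 1 := by omega
          subst hs2
          rw [hrigN y hyold]
          exact ⟨by linarith [hymid.1], by linarith [hymid.2]⟩
    have hsub : Ico (max a (leftPt lam (v (p'+1)) - cn))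
        (min b (leftPt lam (v (p'+1)) + lam (v (p'+1)) - cn)) ⊆ Ico a b :=
      Ico_subset_Ico (le_max_left _ _) (min_le_left _ _)
    have habN : max a (leftPt lam (v (p'+1)) - cn) <
        min b (leftPt lam (v (p'+1)) + lam (v (p'+1)) - cn) := by
      have hmem : y₀ ∈ Ico (max a (leftPt lam (v (p'+1)) - cn))
          (min b (leftPt lam (v (p'+1)) + lam (v (p'+1)) - cn)) := by
        rw [← hsetN]
        exact fun s hs => hy₀ s hs
      exact lt_of_le_of_lt hmem.1 hmem.2
    refine ⟨max a (leftPt lam (v (p'+1)) - cn),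
        min b (leftPt lam (v (p'+1)) + lam (v (p'+1)) - cn),
        fun s => if s = p' + 1 then cn else c s, habN, ?_, ?_, hsetN, ?_, ?_, ?_⟩
    · simp only [if_neg (by omega : ¬ (0 = p' + 1))]
      exact hc0
    · intro s hs
      rcases Nat.lt_or_ge (s+1) (p' + 1) with h' | h'
      · simp only [if_neg (by omega : ¬ (s + 1 = p' + 1)), if_neg (by omega : ¬ (s = p' + 1))]
        exact hcD s (by omega)
      · have hseq : s = p' := by omega
        subst hseq
        simp only [if_pos rfl, if_neg (by omega : ¬ (s = s + 1))]
        exact hcnE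
    · intro s hs y hy
      rcases Nat.lt_or_ge s (p' + 1) with h' | h'
      · simp only [if_neg (by omega : ¬ (s = p' + 1))]
        exact hrig s h' y (hsub hy)
      · have hs2 : s = p' + 1 := by omega
        subst hs2
        simp only [ite_true, eq_self_iff_true, if_pos]
        refine ⟨hrigN y (hsub hy), ?_, ?_⟩
        · have h3 : leftPt lam (v (p'+1)) - cn ≤ y := le_trans (le_max_right _ _) hy.1
          linarith
        · have h3 : y < leftPt lam (v (p'+1)) + lam (v (p'+1)) - cn :=
            lt_of_lt_of_le hy.2 (min_le_right _ _)
          linarith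
    · rcases le_or_gt (leftPt lam (v (p'+1)) - cn) a with h' | h'
      · refine ⟨qa, by omega, ?_⟩
        rw [max_eq_left h']
        simp only [if_neg (by omega : ¬ (qa = p' + 1))]
        exact hqaE
      · refine ⟨p' + 1, by omega, ?_⟩
        rw [max_eq_right h'.le]
        simp only [ite_true, eq_self_iff_true, if_pos]
        ring
    · rcases le_or_gt b (leftPt lam (v (p'+1)) + lam (v (p'+1)) - cn) with h' | h'
      · refine ⟨qb, by omega, ?_, ?_⟩
        · rw [min_eq_left h']
          simp only [if_neg (by omega : ¬ (qb = p' + 1))]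
          exact hqbE
        · intro s hs
          rw [min_eq_left h']
          simp only [if_neg (by omega : ¬ (s = p' + 1))]
          exact hqbS s hs
      · refine ⟨p' + 1, by omega, ?_, ?_⟩
        · rw [min_eq_right h'.le]
          simp only [ite_true, eq_self_iff_true, if_pos]
          ring
        · intro s hs
          rw [min_eq_right h'.le]
          simp only [if_neg (by omega : ¬ (s = p' + 1))]
          have hbmem : leftPt lam (v (p'+1)) + lam (v (p'+1)) - cn ∈ Ico a b := by
            constructor
            · have h1 := habN
              rw [min_eq_right h'.le] at h1
              have h2 : a ≤ max a (leftPt lam (v (p'+1)) - cn) := le_max_left _ _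
              linarith
            · exact h'
          exact (hrig s (by omega) _ hbmem).2

end Cylinder


/-- First-entry point: `z ∈ [a,b)` reaches `cpt` at time `m ≥ 1`, and no point of
`[a,b)` reaches `cpt` at an earlier positive time. -/
def IsFE (T : ℝ → ℝ) (a b cpt z : ℝ) (m : ℕ) : Prop :=
  z ∈ Ico a b ∧ 1 ≤ m ∧ T^[m] z = cpt ∧
    ∀ z' ∈ Ico a b, ∀ s, 1 ≤ s → s < m → T^[s] z' ≠ cpt

/-- Context for the return-map analysis on a cylinder interval `[a,b)`. -/
structure Ctx (k : ℕ) (lam : Fin k → ℝ) (σ : Equiv.Perm (Fin k)) (T : ℝ → ℝ)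
    (n : ℕ) (v : ℕ → Fin k) (a b : ℝ) (c : ℕ → ℝ) : Prop where
  hT : IsIET lam σ T
  hk : 0 < k
  hn : 1 ≤ n
  hab : a < b
  hrig : ∀ s, s < n → ∀ y ∈ Ico a b, T^[s] y = y + c s ∧ y + c s ∈ Xint lam (v s)
  hqa : ∃ q, q < n ∧ a + c q = leftPt lam (v q)
  hqb : ∃ q, q < n ∧ b + c q = leftPt lam (v q) + lam (v q) ∧
          ∀ s, s < q → b + c s ∈ Xint lam (v s)
  hcD : ∀ s, s + 1 < n → c (s+1) = c s + transAmt lam σ (v s)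
  hc0 : c 0 = 0

namespace Ctx

variable {σ : Equiv.Perm (Fin k)} {T : ℝ → ℝ} {n : ℕ} {v : ℕ → Fin k} {a b : ℝ} {c : ℕ → ℝ}

lemma sub01 (H : Ctx k lam σ T n v a b c) : Ico a b ⊆ Ico (0:ℝ) 1 := by
  intro y hy
  have h1 := H.hrig 0 H.hn y hy
  rw [H.hc0, add_zero] at h1
  exact Xint_subset_Ico H.hT.1 H.hT.2.1 _ h1.2

lemma amem (H : Ctx k lam σ T n v a b c) : a ∈ Ico a b := ⟨le_refl a, H.hab⟩

lemma a01 (H : Ctx k lam σ T n v a b c) : a ∈ Ico (0:ℝ) 1 := H.sub01 H.amem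

lemma ble1 (H : Ctx k lam σ T n v a b c) : b ≤ 1 := by
  by_contra h
  push_neg at h
  have hm : max a 1 ∈ Ico a b := ⟨le_max_left _ _, max_lt H.hab h⟩
  have := (H.sub01 hm).2
  have := le_max_right a 1
  linarith

/-- Key separation lemma: a point of the cylinder whose orbit (within the window `< n`)
hits a left endpoint must be the left endpoint `a` itself. -/
lemma lemS (H : Ctx k lam σ T n v a b c) {z : ℝ} (hz : z ∈ Ico a b) {s : ℕ} (hs : s < n)
    {i : Fin k} (h : T^[s] z = leftPt lam i) : z = a := by
  have h1 := H.hrig s hs z hz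
  have h2 : z + c s = leftPt lam i := by rw [← h1.1, h]
  have h3 : leftPt lam i ∈ Xint lam (v s) := h2 ▸ h1.2
  have h4 : i = v s := Xint_unique H.hT.1 (leftPt_mem H.hT.1 i) h3
  have h5 := (H.hrig s hs a H.amem).2
  have h6 : leftPt lam (v s) ≤ a + c s := h5.1
  rw [h4] at h2
  have : z ≤ a := by linarith
  exact le_antisymm this hz.1

lemma FE_min (H : Ctx k lam σ T n v a b c) {cpt z : ℝ} {m : ℕ} (hfe : IsFE T a b cpt z m)
    {z₂ : ℝ} {m₂ : ℕ} (hz₂ : z₂ ∈ Ico a b) (hm₂ : 1 ≤ m₂) (h : T^[m₂] z₂ = cpt) :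
    m ≤ m₂ := by
  by_contra hlt
  push_neg at hlt
  exact hfe.2.2.2 z₂ hz₂ m₂ hm₂ hlt h

lemma FE_unique (H : Ctx k lam σ T n v a b c) {cpt z z' : ℝ} {m m' : ℕ}
    (h1 : IsFE T a b cpt z m) (h2 : IsFE T a b cpt z' m') : z = z' ∧ m = m' := by
  have hmm : m = m' := le_antisymm (H.FE_min h1 h2.1 h2.2.1 h2.2.2.1)
    (H.FE_min h2 h1.1 h1.2.1 h1.2.2.1)
  subst hmm
  refine ⟨?_, rfl⟩
  apply Titer_inj H.hT m (H.sub01 h1.1) (H.sub01 h2.1)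
  rw [h1.2.2.1, h2.2.2.1]

/-- Acceptability at `b`: either `b = 1`, or the (rigid) orbit of `b` hits a nonzero
left endpoint within the window. -/
lemma bRel (H : Ctx k lam σ T n v a b c) (hb1 : b < 1) :
    ∃ q, q < n ∧ ∃ j : Fin k, (j : ℕ) ≠ 0 ∧ T^[q] b = leftPt lam j := by
  obtain ⟨q, hq, hE, hS⟩ := H.hqb
  have hb0 : (0:ℝ) ≤ b := le_trans H.a01.1 H.hab.le
  have hbmem : b ∈ Ico (0:ℝ) 1 := ⟨hb0, hb1⟩
  have hchain : ∀ s, s ≤ q → T^[s] b = b + c s := by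
    intro s hs
    induction s with
    | zero => simp [H.hc0]
    | succ s ih =>
      have hss : s ≤ q := by omega
      have h1 : T^[s+1] b = T (T^[s] b) := Function.iterate_succ_apply' T s b
      rw [h1, ih (by omega), H.hT.2.2.1 _ _ (hS s (by omega)), H.hcD s (by omega)]
      ring
  have hTqb : T^[q] b = leftPt lam (v q) + lam (v q) := by rw [hchain q le_rfl, hE]
  have hmem01 : T^[q] b ∈ Ico (0:ℝ) 1 := Titer_mapsTo H.hT q hbmem
  have hlt1 : leftPt lam (v q) + lam (v q) < 1 := by rw [← hTqb]; exact hmem01.2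
  have hvq : (v q : ℕ) + 1 < k := by
    rcases Nat.lt_or_ge ((v q : ℕ) + 1) k with h | h
    · exact h
    · exfalso
      have : (v q : ℕ) + 1 = k := by have := (v q).2; omega
      have := leftPt_last (lam := lam) H.hT.2.1 this
      linarith
  refine ⟨q, hq, ⟨(v q : ℕ) + 1, hvq⟩, by simp, ?_⟩
  rw [hTqb, leftPt_succ hvq]

/-- Acceptability at `a`: either `a = 0` or the orbit of `a` hits a nonzero left endpoint
within the window. -/
lemma aRel (H : Ctx k lam σ T n v a b c) :
    a = 0 ∨ ∃ q, q < n ∧ ∃ i : Fin k, (i : ℕ) ≠ 0 ∧ T^[q] a = leftPt lam i := by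
  obtain ⟨q, hq, hE⟩ := H.hqa
  have hTqa : T^[q] a = leftPt lam (v q) := by
    rw [(H.hrig q hq a H.amem).1, hE]
  rcases Nat.eq_zero_or_pos (v q : ℕ) with h0 | hpos'
  · -- endpoint is 0
    have hL0 : leftPt lam (v q) = 0 := by
      unfold leftPt
      apply Finset.sum_eq_zero
      intro j hj
      simp only [Finset.mem_filter, Finset.mem_univ, true_and, Fin.lt_def, h0] at hj
      omega
    rw [hL0] at hTqa
    rcases Nat.eq_zero_or_pos q with hq0 | hqpos
    · left; rw [hq0] at hTqa; simpa using hTqa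
    · obtain ⟨q', rfl⟩ : ∃ q', q = q' + 1 := ⟨q - 1, by omega⟩
      have hy : T^[q'] a ∈ Ico (0:ℝ) 1 := Titer_mapsTo H.hT q' H.a01
      have hTy : T (T^[q'] a) = 0 := by
        rw [← Function.iterate_succ_apply' T q' a]; exact hTqa
      have hy0 : T^[q'] a = leftPt lam (σ ⟨0, H.hk⟩) := T_eq_zero H.hT H.hk hy hTy
      rcases Nat.eq_zero_or_pos ((σ ⟨0, H.hk⟩ : Fin k) : ℕ) with hσ0 | hσpos
      · -- σ fixes 0, so T fixes 0, so a = 0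
        left
        have hfix : T (0:ℝ) = 0 := by
          have h1 := T_leftPt_image_zero H.hT H.hk
          have h2 : leftPt lam (σ ⟨0, H.hk⟩) = 0 := by
            unfold leftPt
            apply Finset.sum_eq_zero
            intro j hj
            simp only [Finset.mem_filter, Finset.mem_univ, true_and, Fin.lt_def, hσ0] at hj
            omega
          rwa [h2] at h1
        have hfixq : T^[q' + 1] (0:ℝ) = 0 := by
          apply Function.iterate_fixed hfix
        apply Titer_inj H.hT (q' + 1) H.a01 (by constructor <;> norm_num)
        rw [hTqa, hfixq]
      · right
        exact ⟨q', by omega, σ ⟨0, H.hk⟩, by omega, hy0⟩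
  · right
    exact ⟨q, hq, v q, by omega, hTqa⟩

/-- Collision lemma for an endpoint `e ∈ {a, b}` of the interval. -/
lemma lemBC (H : Ctx k lam σ T n v a b c) {e : ℝ} (he01 : e ∈ Ico (0:ℝ) 1)
    (hea : e = a ∨ e = b) {qE : ℕ} {jE : Fin k} (hqEn : qE < n)
    (hTqe : T^[qE] e = leftPt lam jE) {ze z1 : ℝ} {me m1 : ℕ}
    (hfee : IsFE T a b e ze me) (hfe1 : IsFE T a b (leftPt lam jE) z1 m1) :
    z1 = ze ∨ z1 = a := by
  have hze01 : ze ∈ Ico (0:ℝ) 1 := H.sub01 hfee.1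
  have hz101 : z1 ∈ Ico (0:ℝ) 1 := H.sub01 hfe1.1
  have hme1 : 1 ≤ me := hfee.2.1
  have hm11 : 1 ≤ m1 := hfe1.2.1
  have hentry : T^[qE + me] ze = leftPt lam jE := by
    rw [Function.iterate_add_apply, hfee.2.2.1, hTqe]
  have hm1le : m1 ≤ qE + me := H.FE_min hfe1 hfee.1 (by omega) hentry
  rcases eq_or_lt_of_le hm1le with heq | hlt
  · left
    apply Titer_inj H.hT m1 hz101 hze01
    rw [hfe1.2.2.1, heq, hentry]
  · have hr : T^[(qE + me) - m1] ze = z1 := by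
      apply T_cancel H.hT hze01 hz101 hm1le
      rw [hentry, hfe1.2.2.1]
    rcases Nat.lt_or_ge me ((qE + me) - m1) with hcase | hcase
    · -- r > me : z1 lies on the forward orbit of e
      have hp1 : 1 ≤ (qE + me) - m1 - me := by omega
      have hple : (qE + me) - m1 - me ≤ qE - 1 := by omega
      have hz1e : T^[(qE + me) - m1 - me] e = z1 := by
        rw [← hfee.2.2.1, ← Function.iterate_add_apply]
        rw [show (qE + me) - m1 - me + me = (qE + me) - m1 by omega]
        exact hr
      have hfin : T^[qE - ((qE + me) - m1 - me)] z1 = leftPt lam jE := by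
        rw [← hz1e, ← Function.iterate_add_apply]
        rw [show qE - ((qE + me) - m1 - me) + ((qE + me) - m1 - me) = qE by omega]
        exact hTqe
      right
      exact H.lemS hfe1.1 (by omega) hfin
    · -- r ≤ me
      have hm1q : qE ≤ m1 := by omega
      have hc : T^[m1 - qE] z1 = e := by
        apply T_cancel H.hT hz101 he01 hm1q
        rw [hfe1.2.2.1, hTqe]
      have hlt2 : m1 - qE < me := by omega
      rcases Nat.eq_zero_or_pos (m1 - qE) with h0 | hpos'
      · rw [h0] at hc
        simp at hc
        rcases hea with rfl | rfl
        · right; exact hc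
        · exfalso
          rw [hc] at hfe1
          exact absurd hfe1.1.2 (lt_irrefl _)
      · exfalso
        exact hfee.2.2.2 z1 hfe1.1 (m1 - qE) hpos' hlt2 hc

/-- Collision lemma for the endpoint `a` in the degenerate case `a = 0`. -/
lemma lemC0 (H : Ctx k lam σ T n v a b c) (ha0 : a = 0)
    {za z1 : ℝ} {ma m1 : ℕ} (hfea : IsFE T a b a za ma)
    (hfe1 : IsFE T a b (leftPt lam (σ ⟨0, H.hk⟩)) z1 m1) :
    z1 = za ∨ z1 = a ∨ za = a := by
  have hza01 : za ∈ Ico (0:ℝ) 1 := H.sub01 hfea.1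
  have hz101 : z1 ∈ Ico (0:ℝ) 1 := H.sub01 hfe1.1
  have hma1 : 1 ≤ ma := hfea.2.1
  obtain ⟨m', rfl⟩ : ∃ m', ma = m' + 1 := ⟨ma - 1, by omega⟩
  have hTza : T (T^[m'] za) = 0 := by
    rw [← Function.iterate_succ_apply' T m' za, hfea.2.2.1, ha0]
  have hzaL : T^[m'] za = leftPt lam (σ ⟨0, H.hk⟩) :=
    T_eq_zero H.hT H.hk (Titer_mapsTo H.hT m' hza01) hTza
  rcases Nat.eq_zero_or_pos m' with h0 | hm'pos
  · right; right
    subst h0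
    simp at hzaL
    exact H.lemS hfea.1 H.hn (by simpa using hzaL)
  · have hm1le : m1 ≤ m' := H.FE_min hfe1 hfea.1 hm'pos hzaL
    rcases eq_or_lt_of_le hm1le with heq | hlt
    · left
      apply Titer_inj H.hT m1 hz101 hza01
      rw [hfe1.2.2.1, heq, hzaL]
    · exfalso
      have hstep : T^[m1 + 1] z1 = a := by
        rw [Function.iterate_succ_apply' T m1 z1, hfe1.2.2.1,
          T_leftPt_image_zero H.hT H.hk, ha0]
      exact hfea.2.2.2 z1 hfe1.1 (m1 + 1) (by omega) (by omega) hstep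

/-- Collision lemma between the two endpoints when their orbits hit the same left endpoint. -/
lemma lemAB (H : Ctx k lam σ T n v a b c) (hb1 : b < 1) {qA qB : ℕ} {iS : Fin k}
    (hqAn : qA < n) (hqBn : qB < n)
    (hTqa : T^[qA] a = leftPt lam iS) (hTqb : T^[qB] b = leftPt lam iS)
    {za zb : ℝ} {ma mb : ℕ} (hfea : IsFE T a b a za ma) (hfeb : IsFE T a b b zb mb) :
    za = zb ∨ za = a ∨ zb = a := by
  have hb01 : b ∈ Ico (0:ℝ) 1 := ⟨le_trans H.a01.1 H.hab.le, hb1⟩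
  have hza01 : za ∈ Ico (0:ℝ) 1 := H.sub01 hfea.1
  have hzb01 : zb ∈ Ico (0:ℝ) 1 := H.sub01 hfeb.1
  have hqAB : qA ≠ qB := by
    intro h
    subst h
    have : a = b := by
      apply Titer_inj H.hT qA H.a01 hb01
      rw [hTqa, hTqb]
    exact absurd this (ne_of_lt H.hab)
  rcases Nat.lt_or_ge qA qB with hcase | hcase
  · -- qA < qB, so T^[qB - qA] b = a
    have hpb : T^[qB - qA] b = a := by
      apply Titer_inj H.hT qA (Titer_mapsTo H.hT _ hb01) H.a01
      rw [← Function.iterate_add_apply, show qA + (qB - qA) = qB by omega, hTqb, hTqa]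
    rcases Nat.lt_or_ge (qB - qA) ma with hc2 | hc2
    · -- ma > p
      have hcb : T^[ma - (qB - qA)] za = b := by
        apply T_cancel H.hT hza01 hb01 (by omega)
        rw [hfea.2.2.1, hpb]
      have hmb1 : mb ≤ ma - (qB - qA) := H.FE_min hfeb hfea.1 (by omega) hcb
      have hentrya : T^[mb + (qB - qA)] zb = a := by
        rw [show mb + (qB - qA) = (qB - qA) + mb by omega, Function.iterate_add_apply,
          hfeb.2.2.1, hpb]
      have hma1 : ma ≤ mb + (qB - qA) := H.FE_min hfea hfeb.1 (by omega) hentrya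
      have heq2 : ma = mb + (qB - qA) := by omega
      left
      apply Titer_inj H.hT ma hza01 hzb01
      rw [hfea.2.2.1, heq2, hentrya]
    · -- ma ≤ p : za is on the orbit of b
      have hma1 : 1 ≤ ma := hfea.2.1
      have hzab : T^[(qB - qA) - ma] b = za := by
        apply Titer_inj H.hT ma (Titer_mapsTo H.hT _ hb01) hza01
        rw [← Function.iterate_add_apply, show ma + ((qB - qA) - ma) = qB - qA by omega,
          hpb, hfea.2.2.1]
      have hfin : T^[qB - ((qB - qA) - ma)] za = leftPt lam iS := by
        rw [← hzab, ← Function.iterate_add_apply,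
          show qB - ((qB - qA) - ma) + ((qB - qA) - ma) = qB by omega, hTqb]
      right; left
      exact H.lemS hfea.1 (by omega) hfin
  · -- qB < qA, so T^[qA - qB] a = b
    have hqBA : qB < qA := by omega
    have hpa : T^[qA - qB] a = b := by
      apply Titer_inj H.hT qB (Titer_mapsTo H.hT _ H.a01) hb01
      rw [← Function.iterate_add_apply, show qB + (qA - qB) = qA by omega, hTqa, hTqb]
    rcases Nat.lt_or_ge (qA - qB) mb with hc2 | hc2
    · -- mb > p
      have hca : T^[mb - (qA - qB)] zb = a := by
        apply T_cancel H.hT hzb01 H.a01 (by omega)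
        rw [hfeb.2.2.1, hpa]
      have hma1 : ma ≤ mb - (qA - qB) := H.FE_min hfea hfeb.1 (by omega) hca
      have hentryb : T^[ma + (qA - qB)] za = b := by
        rw [show ma + (qA - qB) = (qA - qB) + ma by omega, Function.iterate_add_apply,
          hfea.2.2.1, hpa]
      have hmb1 : mb ≤ ma + (qA - qB) := H.FE_min hfeb hfea.1 (by omega) hentryb
      have heq2 : mb = ma + (qA - qB) := by omega
      left
      apply Titer_inj H.hT mb hza01 hzb01
      rw [hfeb.2.2.1, heq2, hentryb]
    · -- mb ≤ p : zb is on the orbit of a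
      have hmb1 : 1 ≤ mb := hfeb.2.1
      have hzba : T^[(qA - qB) - mb] a = zb := by
        apply Titer_inj H.hT mb (Titer_mapsTo H.hT _ H.a01) hzb01
        rw [← Function.iterate_add_apply, show mb + ((qA - qB) - mb) = qA - qB by omega,
          hpa, hfeb.2.2.1]
      have hfin : T^[qA - ((qA - qB) - mb)] zb = leftPt lam iS := by
        rw [← hzba, ← Function.iterate_add_apply,
          show qA - ((qA - qB) - mb) + ((qA - qB) - mb) = qA by omega, hTqa]
      right; right
      exact H.lemS hfeb.1 (by omega) hfin

/-- Collision lemma between the two endpoints in the degenerate case `a = 0`. -/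
lemma lemAB0 (H : Ctx k lam σ T n v a b c) (ha0 : a = 0) (hb1 : b < 1) {qB : ℕ}
    (hqBn : qB < n) (hTqb : T^[qB] b = leftPt lam (σ ⟨0, H.hk⟩))
    {za zb : ℝ} {ma mb : ℕ} (hfea : IsFE T a b a za ma) (hfeb : IsFE T a b b zb mb) :
    za = zb ∨ za = a ∨ zb = a := by
  have hb01 : b ∈ Ico (0:ℝ) 1 := ⟨le_trans H.a01.1 H.hab.le, hb1⟩
  have hza01 : za ∈ Ico (0:ℝ) 1 := H.sub01 hfea.1
  have hzb01 : zb ∈ Ico (0:ℝ) 1 := H.sub01 hfeb.1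
  have hma1 : 1 ≤ ma := hfea.2.1
  have hmb1 : 1 ≤ mb := hfeb.2.1
  obtain ⟨m', rfl⟩ : ∃ m', ma = m' + 1 := ⟨ma - 1, by omega⟩
  have hTza : T (T^[m'] za) = 0 := by
    rw [← Function.iterate_succ_apply' T m' za, hfea.2.2.1, ha0]
  have hzaL : T^[m'] za = leftPt lam (σ ⟨0, H.hk⟩) :=
    T_eq_zero H.hT H.hk (Titer_mapsTo H.hT m' hza01) hTza
  rcases Nat.eq_zero_or_pos m' with h0 | hm'pos
  · right; left
    subst h0
    simp at hzaL
    exact H.lemS hfea.1 H.hn (by simpa using hzaL)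
  · have hzbL : T^[qB + mb] zb = leftPt lam (σ ⟨0, H.hk⟩) := by
      rw [Function.iterate_add_apply, hfeb.2.2.1, hTqb]
    have hzbA : T^[qB + mb + 1] zb = a := by
      rw [Function.iterate_succ_apply' T (qB + mb) zb, hzbL,
        T_leftPt_image_zero H.hT H.hk, ha0]
    have hmale : m' + 1 ≤ qB + mb + 1 := H.FE_min hfea hfeb.1 (by omega) hzbA
    rcases eq_or_lt_of_le hmale with heq | hlt
    · left
      apply Titer_inj H.hT (m' + 1) hza01 hzb01
      rw [hfea.2.2.1, heq, hzbA]
    · have hr' : T^[qB + mb + 1 - (m' + 1)] zb = za := by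
        apply T_cancel H.hT hzb01 hza01 (by omega)
        rw [hzbA, hfea.2.2.1]
      rcases Nat.lt_or_ge (qB + mb + 1 - (m' + 1)) mb with hc | hc
      · -- r' < mb : contradiction with minimality of mb
        exfalso
        have hb' : T^[mb - (qB + mb + 1 - (m' + 1))] za = b := by
          rw [← hr', ← Function.iterate_add_apply,
            show mb - (qB + mb + 1 - (m' + 1)) + (qB + mb + 1 - (m' + 1)) = mb by omega,
            hfeb.2.2.1]
        exact hfeb.2.2.2 za hfea.1 _ (by omega) (by omega) hb'
      · rcases Nat.eq_or_lt_of_le hc with heq2 | hlt2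
        · -- r' = mb : za = b, impossible
          exfalso
          rw [← heq2, hfeb.2.2.1] at hr'
          rw [← hr'] at hfea
          exact absurd hfea.1.2 (lt_irrefl _)
        · -- r' > mb : za on the orbit of b
          have hp1 : 1 ≤ qB + mb + 1 - (m' + 1) - mb := by omega
          have hple : qB + mb + 1 - (m' + 1) - mb ≤ qB := by omega
          have hzab : T^[qB + mb + 1 - (m' + 1) - mb] b = za := by
            rw [← hfeb.2.2.1, ← Function.iterate_add_apply,
              show qB + mb + 1 - (m' + 1) - mb + mb = qB + mb + 1 - (m' + 1) by omega]
            exact hr'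
          have hfin : T^[qB - (qB + mb + 1 - (m' + 1) - mb)] za =
              leftPt lam (σ ⟨0, H.hk⟩) := by
            rw [← hzab, ← Function.iterate_add_apply,
              show qB - (qB + mb + 1 - (m' + 1) - mb) + (qB + mb + 1 - (m' + 1) - mb)
                = qB by omega, hTqb]
          right; left
          exact H.lemS hfea.1 (by omega) hfin

end Ctx

/-- The set of (interior) cut points of the first-return partition. -/
def CutSet (k : ℕ) (lam : Fin k → ℝ) (T : ℝ → ℝ) (a b : ℝ) : Set ℝ :=
  {z | z ∈ Ioo a b ∧ ∃ cpt m, (cpt = a ∨ cpt = b ∨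
    ∃ i : Fin k, (i : ℕ) ≠ 0 ∧ cpt = leftPt lam i) ∧ IsFE T a b cpt z m}

namespace Ctx

variable {σ : Equiv.Perm (Fin k)} {T : ℝ → ℝ} {n : ℕ} {v : ℕ → Fin k} {a b : ℝ} {c : ℕ → ℝ}

lemma noBcut (H : Ctx k lam σ T n v a b c) (hb1 : b = 1) :
    ∀ z m, ¬ IsFE T a b b z m := by
  intro z m hfe
  have h01 := Titer_mapsTo H.hT m (H.sub01 hfe.1)
  rw [hfe.2.2.1, hb1] at h01
  exact absurd h01.2 (lt_irrefl _)

lemma noA0cut (H : Ctx k lam σ T n v a b c) (ha0 : a = 0)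
    (hσ0 : ((σ ⟨0, H.hk⟩ : Fin k) : ℕ) = 0) :
    ∀ z m, IsFE T a b a z m → z = a := by
  intro z m hfe
  have hz01 := H.sub01 hfe.1
  obtain ⟨m', rfl⟩ : ∃ m', m = m' + 1 := ⟨m - 1, by have := hfe.2.1; omega⟩
  have hTz : T (T^[m'] z) = 0 := by
    rw [← Function.iterate_succ_apply' T m' z, hfe.2.2.1, ha0]
  have hzL : T^[m'] z = leftPt lam (σ ⟨0, H.hk⟩) :=
    T_eq_zero H.hT H.hk (Titer_mapsTo H.hT m' hz01) hTz
  have hL0 : leftPt lam (σ ⟨0, H.hk⟩) = 0 := by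
    unfold leftPt
    apply Finset.sum_eq_zero
    intro j hj
    simp only [Finset.mem_filter, Finset.mem_univ, true_and, Fin.lt_def, hσ0] at hj
    omega
  rcases Nat.eq_zero_or_pos m' with h0 | hm'pos
  · subst h0
    simp at hzL
    exact H.lemS hfe.1 H.hn (by simpa using hzL)
  · exfalso
    have hza : T^[m'] z = a := by rw [hzL, hL0, ha0]
    exact hfe.2.2.2 z hfe.1 m' hm'pos (by omega) hza

/-- Interface for the cut-labeling: canonical nonzero labels for the `a`- and `b`-cuts,
with the collision properties. -/
lemma cut_interface (H : Ctx k lam σ T n v a b c) :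
    ∃ AL BL : Fin k,
      (∀ za ma, IsFE T a b a za ma → za ≠ a →
        ((AL : ℕ) ≠ 0 ∧ ∀ z1 m1, IsFE T a b (leftPt lam AL) z1 m1 → z1 = za ∨ z1 = a)) ∧
      (∀ zb mb, IsFE T a b b zb mb →
        ((BL : ℕ) ≠ 0 ∧ ∀ z1 m1, IsFE T a b (leftPt lam BL) z1 m1 → z1 = zb ∨ z1 = a)) ∧
      (AL = BL → ∀ za ma zb mb, IsFE T a b a za ma → IsFE T a b b zb mb →
        za = zb ∨ za = a ∨ zb = a) := by
  classical
  rcases eq_or_lt_of_le H.ble1 with hb1 | hb1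
  · -- b = 1 : no b-cuts
    rcases H.aRel with ha0 | ⟨qA, hqAn, iA, hiA0, hTqa⟩
    · by_cases hσ0 : ((σ ⟨0, H.hk⟩ : Fin k) : ℕ) = 0
      · refine ⟨⟨0, H.hk⟩, ⟨0, H.hk⟩, ?_, ?_, ?_⟩
        · intro za ma hfea hzaa
          exact absurd (H.noA0cut ha0 hσ0 za ma hfea) hzaa
        · intro zb mb hfeb
          exact absurd hfeb (H.noBcut hb1 zb mb)
        · intro _ za ma zb mb _ hfeb
          exact absurd hfeb (H.noBcut hb1 zb mb)
      · refine ⟨σ ⟨0, H.hk⟩, σ ⟨0, H.hk⟩, ?_, ?_, ?_⟩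
        · intro za ma hfea hzaa
          refine ⟨hσ0, ?_⟩
          intro z1 m1 hfe1
          rcases H.lemC0 ha0 hfea hfe1 with h | h | h
          · left; exact h
          · right; exact h
          · exact absurd h hzaa
        · intro zb mb hfeb
          exact absurd hfeb (H.noBcut hb1 zb mb)
        · intro _ za ma zb mb _ hfeb
          exact absurd hfeb (H.noBcut hb1 zb mb)
    · refine ⟨iA, iA, ?_, ?_, ?_⟩
      · intro za ma hfea hzaa
        exact ⟨hiA0, fun z1 m1 hfe1 => H.lemBC H.a01 (Or.inl rfl) hqAn hTqa hfea hfe1⟩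
      · intro zb mb hfeb
        exact absurd hfeb (H.noBcut hb1 zb mb)
      · intro _ za ma zb mb _ hfeb
        exact absurd hfeb (H.noBcut hb1 zb mb)
  · -- b < 1
    obtain ⟨qB, hqBn, jB, hjB0, hTqb⟩ := H.bRel hb1
    have hb01 : b ∈ Ico (0:ℝ) 1 := ⟨le_trans H.a01.1 H.hab.le, hb1⟩
    rcases H.aRel with ha0 | ⟨qA, hqAn, iA, hiA0, hTqa⟩
    · by_cases hσ0 : ((σ ⟨0, H.hk⟩ : Fin k) : ℕ) = 0
      · refine ⟨⟨0, H.hk⟩, jB, ?_, ?_, ?_⟩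
        · intro za ma hfea hzaa
          exact absurd (H.noA0cut ha0 hσ0 za ma hfea) hzaa
        · intro zb mb hfeb
          exact ⟨hjB0, fun z1 m1 hfe1 => H.lemBC hb01 (Or.inr rfl) hqBn hTqb hfeb hfe1⟩
        · intro hAB za ma zb mb hfea hfeb
          right; left
          exact H.noA0cut ha0 hσ0 za ma hfea
      · refine ⟨σ ⟨0, H.hk⟩, jB, ?_, ?_, ?_⟩
        · intro za ma hfea hzaa
          refine ⟨hσ0, ?_⟩
          intro z1 m1 hfe1
          rcases H.lemC0 ha0 hfea hfe1 with h | h | h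
          · left; exact h
          · right; exact h
          · exact absurd h hzaa
        · intro zb mb hfeb
          exact ⟨hjB0, fun z1 m1 hfe1 => H.lemBC hb01 (Or.inr rfl) hqBn hTqb hfeb hfe1⟩
        · intro hAB za ma zb mb hfea hfeb
          have hTqb' : T^[qB] b = leftPt lam (σ ⟨0, H.hk⟩) := by rw [hTqb, ← hAB]
          exact H.lemAB0 ha0 hb1 hqBn hTqb' hfea hfeb
    · refine ⟨iA, jB, ?_, ?_, ?_⟩
      · intro za ma hfea hzaa
        exact ⟨hiA0, fun z1 m1 hfe1 => H.lemBC H.a01 (Or.inl rfl) hqAn hTqa hfea hfe1⟩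
      · intro zb mb hfeb
        exact ⟨hjB0, fun z1 m1 hfe1 => H.lemBC hb01 (Or.inr rfl) hqBn hTqb hfeb hfe1⟩
      · intro hAB za ma zb mb hfea hfeb
        have hTqb' : T^[qB] b = leftPt lam iA := by rw [hTqb, ← hAB]
        exact H.lemAB hb1 hqAn hqBn hTqa hTqb' hfea hfeb

lemma cut_count (H : Ctx k lam σ T n v a b c) :
    (CutSet k lam T a b).Finite ∧ (CutSet k lam T a b).ncard ≤ k - 1 := by
  classical
  obtain ⟨AL, BL, hA, hB, hAB⟩ := H.cut_interface
  set f : ℝ → Fin k := fun z =>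
    if h : ∃ p : Fin k × ℕ, ((p.1 : ℕ) ≠ 0) ∧ IsFE T a b (leftPt lam p.1) z p.2 then
      (Classical.choose h).1
    else if ∃ m, IsFE T a b a z m then AL else BL
    with hf
  have hfL : ∀ z (h : ∃ p : Fin k × ℕ, ((p.1 : ℕ) ≠ 0) ∧ IsFE T a b (leftPt lam p.1) z p.2),
      ((f z : ℕ) ≠ 0) ∧ IsFE T a b (leftPt lam (f z)) z (Classical.choose h).2 := by
    intro z h
    have hspec := Classical.choose_spec h
    simp only [hf, dif_pos h]
    exact ⟨hspec.1, hspec.2⟩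
  have hfA : ∀ z, ¬(∃ p : Fin k × ℕ, ((p.1 : ℕ) ≠ 0) ∧ IsFE T a b (leftPt lam p.1) z p.2) →
      (∃ m, IsFE T a b a z m) → f z = AL := by
    intro z h1 h2
    simp only [hf, dif_neg h1, if_pos h2]
  have hfB : ∀ z, ¬(∃ p : Fin k × ℕ, ((p.1 : ℕ) ≠ 0) ∧ IsFE T a b (leftPt lam p.1) z p.2) →
      ¬(∃ m, IsFE T a b a z m) → f z = BL := by
    intro z h1 h2
    simp only [hf, dif_neg h1, if_neg h2]
  have hbFE : ∀ z ∈ CutSet k lam T a b,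
      ¬(∃ p : Fin k × ℕ, ((p.1 : ℕ) ≠ 0) ∧ IsFE T a b (leftPt lam p.1) z p.2) →
      ¬(∃ m, IsFE T a b a z m) → ∃ m, IsFE T a b b z m := by
    rintro z ⟨hzo, cpt, m, hcpt, hfe⟩ hL hA'
    rcases hcpt with rfl | rfl | ⟨i, hi0, rfl⟩
    · exact absurd ⟨m, hfe⟩ hA'
    · exact ⟨m, hfe⟩
    · exact absurd ⟨(i, m), hi0, hfe⟩ hL
  have hne_a : ∀ z ∈ CutSet k lam T a b, z ≠ a := by
    rintro z ⟨hzo, -⟩ rfl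
    exact absurd hzo.1 (lt_irrefl _)
  have hnz : ∀ z ∈ CutSet k lam T a b, (f z : ℕ) ≠ 0 := by
    intro z hz
    by_cases h1 : ∃ p : Fin k × ℕ, ((p.1 : ℕ) ≠ 0) ∧ IsFE T a b (leftPt lam p.1) z p.2
    · exact (hfL z h1).1
    · by_cases h2 : ∃ m, IsFE T a b a z m
      · rw [hfA z h1 h2]
        obtain ⟨m, hm⟩ := h2
        exact (hA z m hm (hne_a z hz)).1
      · rw [hfB z h1 h2]
        obtain ⟨m, hm⟩ := hbFE z hz h1 h2
        exact (hB z m hm).1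
  have hmain : ∀ z w, z ∈ CutSet k lam T a b → w ∈ CutSet k lam T a b → f z = f w →
      (∃ p : Fin k × ℕ, ((p.1 : ℕ) ≠ 0) ∧ IsFE T a b (leftPt lam p.1) z p.2) → z = w := by
    intro z w hz hw hfeq hLz
    have hfez := (hfL z hLz).2
    by_cases hLw : ∃ p : Fin k × ℕ, ((p.1 : ℕ) ≠ 0) ∧ IsFE T a b (leftPt lam p.1) w p.2
    · have hfew := (hfL w hLw).2
      rw [← hfeq] at hfew
      exact (H.FE_unique hfez hfew).1
    · by_cases hAw : ∃ m, IsFE T a b a w m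
      · obtain ⟨m, hm⟩ := hAw
        have hfw : f w = AL := hfA w hLw ⟨m, hm⟩
        have hfz : f z = AL := by rw [hfeq, hfw]
        rw [hfz] at hfez
        rcases (hA w m hm (hne_a w hw)).2 z _ hfez with h | h
        · exact h
        · exact absurd h (hne_a z hz)
      · obtain ⟨m, hm⟩ := hbFE w hw hLw hAw
        have hfw : f w = BL := hfB w hLw hAw
        have hfz : f z = BL := by rw [hfeq, hfw]
        rw [hfz] at hfez
        rcases (hB w m hm).2 z _ hfez with h | h
        · exact h
        · exact absurd h (hne_a z hz)
  have hinj : Set.InjOn f (CutSet k lam T a b) := by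
    intro z1 hz1 z2 hz2 hfeq
    by_cases h1 : ∃ p : Fin k × ℕ, ((p.1 : ℕ) ≠ 0) ∧ IsFE T a b (leftPt lam p.1) z1 p.2
    · exact hmain z1 z2 hz1 hz2 hfeq h1
    · by_cases h2 : ∃ p : Fin k × ℕ, ((p.1 : ℕ) ≠ 0) ∧ IsFE T a b (leftPt lam p.1) z2 p.2
      · exact (hmain z2 z1 hz2 hz1 hfeq.symm h2).symm
      · by_cases hA1 : ∃ m, IsFE T a b a z1 m
        · by_cases hA2 : ∃ m, IsFE T a b a z2 m
          · obtain ⟨m1, hm1⟩ := hA1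
            obtain ⟨m2, hm2⟩ := hA2
            exact (H.FE_unique hm1 hm2).1
          · obtain ⟨m1, hm1⟩ := hA1
            obtain ⟨m2, hm2⟩ := hbFE z2 hz2 h2 hA2
            have hALBL : AL = BL := by
              rw [← hfA z1 h1 ⟨m1, hm1⟩, ← hfB z2 h2 hA2, hfeq]
            rcases hAB hALBL z1 m1 z2 m2 hm1 hm2 with h | h | h
            · exact h
            · exact absurd h (hne_a z1 hz1)
            · exact absurd h (hne_a z2 hz2)
        · by_cases hA2 : ∃ m, IsFE T a b a z2 m
          · obtain ⟨m2, hm2⟩ := hA2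
            obtain ⟨m1, hm1⟩ := hbFE z1 hz1 h1 hA1
            have hALBL : AL = BL := by
              rw [← hfA z2 h2 ⟨m2, hm2⟩, ← hfB z1 h1 hA1, ← hfeq]
            rcases hAB hALBL z2 m2 z1 m1 hm2 hm1 with h | h | h
            · exact h.symm
            · exact absurd h (hne_a z2 hz2)
            · exact absurd h (hne_a z1 hz1)
          · obtain ⟨m1, hm1⟩ := hbFE z1 hz1 h1 hA1
            obtain ⟨m2, hm2⟩ := hbFE z2 hz2 h2 hA2
            exact (H.FE_unique hm1 hm2).1
  have himg : (f '' CutSet k lam T a b).Finite := Set.toFinite _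
  have hfin : (CutSet k lam T a b).Finite := Set.Finite.of_finite_image himg hinj
  refine ⟨hfin, ?_⟩
  have h1 : (CutSet k lam T a b).ncard = (f '' CutSet k lam T a b).ncard :=
    (Set.ncard_image_of_injOn hinj).symm
  have h2 : f '' CutSet k lam T a b ⊆ {i : Fin k | (i : ℕ) ≠ 0} := by
    rintro i ⟨z, hz, rfl⟩
    exact hnz z hz
  have h3 : (f '' CutSet k lam T a b).ncard ≤ ({i : Fin k | (i : ℕ) ≠ 0}).ncard :=
    Set.ncard_le_ncard h2 (Set.toFinite _)
  have h4 : ({i : Fin k | (i : ℕ) ≠ 0}).ncard = k - 1 := by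
    have he : {i : Fin k | (i : ℕ) ≠ 0} = ↑(Finset.univ.erase (⟨0, H.hk⟩ : Fin k)) := by
      ext i
      simp only [Set.mem_setOf_eq, Finset.coe_erase, Set.mem_diff, Finset.coe_univ,
        Set.mem_univ, true_and, Set.mem_singleton_iff]
      constructor
      · intro h hc
        apply h
        rw [hc]
      · intro h hc
        apply h
        exact Fin.ext hc
    rw [he, Set.ncard_coe_finset, Finset.card_erase_of_mem (Finset.mem_univ _),
      Finset.card_univ, Fintype.card_fin]
  omega

/-- The main return lemma: on an interval between consecutive cuts, the first return time
to `[a,b)` is finite and constant. -/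
lemma piece_return (H : Ctx k lam σ T n v a b c) {p q : ℝ} (hap : a ≤ p) (hpq : p < q)
    (hqb : q ≤ b) (hnocut : ∀ z, p < z → z < q → z ∉ CutSet k lam T a b) :
    ∃ t, 1 ≤ t ∧ (∀ y ∈ Ico p q, T^[t] y ∈ Ico a b) ∧
      (∀ y ∈ Ico p q, ∀ s, 1 ≤ s → s < t → T^[s] y ∉ Ico a b) := by
  classical
  have hPsub : Ico p q ⊆ Ico a b := Ico_subset_Ico hap hqb
  have hP01 : Ico p q ⊆ Ico (0:ℝ) 1 := fun y hy => H.sub01 (hPsub hy)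
  have hp01 : p ∈ Ico (0:ℝ) 1 := hP01 ⟨le_refl p, hpq⟩
  have hPX : ∀ y ∈ Ico p q, y ∈ Xint lam (v 0) := by
    intro y hy
    have h1 := (H.hrig 0 H.hn y (hPsub hy)).2
    rwa [H.hc0, add_zero] at h1
  have hFEmk : ∀ (z' : ℝ) (t : ℕ), 1 ≤ t → z' ∈ Ico p q →
      (∀ s', 1 ≤ s' → s' ≤ t - 1 → ∀ y ∈ Ico p q, T^[s'] y ∉ Ico a b) →
      ∀ z'' ∈ Ico a b, ∀ s, 1 ≤ s → s < t → T^[s] z'' ≠ T^[t] z' := by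
    intro z' t ht hz' hNM z'' hz'' s h1 h2 heq
    have hc2 : T^[t - s] z' = z'' :=
      T_cancel H.hT (hP01 hz') (H.sub01 hz'') (by omega) heq.symm
    have h3 := hNM (t - s) (by omega) (by omega) z' hz'
    rw [hc2] at h3
    exact h3 hz''
  have RIG : ∀ s, (∀ s', 1 ≤ s' → s' ≤ s → ∀ y ∈ Ico p q, T^[s'] y ∉ Ico a b) →
      ∀ s', s' ≤ s + 1 → ∃ e, ∀ y ∈ Ico p q, T^[s'] y = y + e := by
    intro s
    induction s with
    | zero =>
      intro _ s' hs'
      interval_cases s'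
      · exact ⟨0, fun y _ => by simp⟩
      · refine ⟨transAmt lam σ (v 0), fun y hy => ?_⟩
        simp only [Function.iterate_one]
        exact H.hT.2.2.1 _ y (hPX y hy)
    | succ s ih =>
      intro hNM s' hs'
      have hNMs : ∀ s', 1 ≤ s' → s' ≤ s → ∀ y ∈ Ico p q, T^[s'] y ∉ Ico a b :=
        fun s' h1 h2 => hNM s' h1 (by omega)
      rcases Nat.eq_or_lt_of_le hs' with heq | hlt2
      swap
      · exact ih hNMs s' (by omega)
      subst heq
      obtain ⟨e, he⟩ := ih hNMs (s + 1) (by omega)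
      have hu01 : p + e ∈ Ico (0:ℝ) 1 := by
        have h0 := Titer_mapsTo H.hT (s + 1) hp01
        rwa [he p ⟨le_refl p, hpq⟩] at h0
      obtain ⟨j, hj⟩ := exists_mem_Xint H.hT.1 H.hT.2.1 hu01
      have hcontain : ∀ y ∈ Ico p q, y + e ∈ Xint lam j := by
        intro y hy
        refine ⟨le_trans hj.1 (by linarith [hy.1]), ?_⟩
        by_contra hcon
        push_neg at hcon
        have hy01 : y + e ∈ Ico (0:ℝ) 1 := by
          have h0 := Titer_mapsTo H.hT (s + 1) (hP01 hy)
          rwa [he y hy] at h0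
        have hj1 : (j : ℕ) + 1 < k := by
          rcases Nat.lt_or_ge ((j : ℕ) + 1) k with h | h
          · exact h
          · exfalso
            have hjlast : (j : ℕ) + 1 = k := by have := j.2; omega
            have h5 := leftPt_last (lam := lam) H.hT.2.1 hjlast
            have h6 := hy01.2
            linarith
        have hLsucc : leftPt lam j + lam j = leftPt lam ⟨(j:ℕ)+1, hj1⟩ := leftPt_succ hj1
        set zstar := leftPt lam j + lam j - e with hzstar
        have hzp : p < zstar := by
          have := hj.2
          rw [hzstar]; linarith
        have hzq : zstar < q := by
          rw [hzstar]
          have := hy.2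
          linarith
        have hzmem : zstar ∈ Ico p q := ⟨hzp.le, hzq⟩
        have hTz : T^[s+1] zstar = leftPt lam ⟨(j:ℕ)+1, hj1⟩ := by
          rw [he zstar hzmem, hzstar, ← hLsucc]; ring
        have hfe : IsFE T a b (leftPt lam ⟨(j:ℕ)+1, hj1⟩) zstar (s+1) := by
          refine ⟨hPsub hzmem, by omega, hTz, ?_⟩
          intro z'' hz'' s'' h1 h2 heq2
          exact hFEmk zstar (s+1) (by omega) hzmem
            (fun s3 h3 h4 => hNM s3 h3 (by omega)) z'' hz'' s'' h1 h2 (heq2.trans hTz.symm)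
        apply hnocut zstar hzp hzq
        exact ⟨⟨lt_of_le_of_lt hap hzp, lt_of_lt_of_le hzq hqb⟩,
          leftPt lam ⟨(j:ℕ)+1, hj1⟩, s + 1,
          Or.inr (Or.inr ⟨⟨(j:ℕ)+1, hj1⟩, by simp, rfl⟩), hfe⟩
      refine ⟨e + transAmt lam σ j, fun y hy => ?_⟩
      have h1 : T^[s+1+1] y = T (T^[s+1] y) := Function.iterate_succ_apply' T (s+1) y
      rw [h1, he y hy, H.hT.2.2.1 j _ (hcontain y hy)]
      ring
  -- Kac argument: some iterate meets [a,b)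
  have hKac : ∃ t, 1 ≤ t ∧ ∃ y ∈ Ico p q, T^[t] y ∈ Ico a b := by
    by_contra hall
    push_neg at hall
    have hEall : ∀ s : ℕ, ∃ e, ∀ y ∈ Ico p q, T^[s] y = y + e := fun s =>
      RIG s (fun s' h1 h2 y hy => hall s' h1 y hy) s (by omega)
    choose E hE using hEall
    have hlen : (0:ℝ) < q - p := by linarith
    obtain ⟨N, hN⟩ := exists_nat_gt ((1:ℝ) / (q - p))
    have hIsub : ∀ s : ℕ, Ico (p + E s) (q + E s) ⊆ Ico (0:ℝ) 1 := by
      intro s x hx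
      constructor
      · have h0 := Titer_mapsTo H.hT s hp01
        rw [hE s p ⟨le_refl p, hpq⟩] at h0
        linarith [h0.1, hx.1]
      · by_contra hc
        push_neg at hc
        have h1q : 1 - E s < q := by linarith [hx.2]
        have hyy : max p (1 - E s) ∈ Ico p q := ⟨le_max_left _ _, max_lt hpq h1q⟩
        have h0 := Titer_mapsTo H.hT s (hP01 hyy)
        rw [hE s _ hyy] at h0
        have h2 := h0.2
        have h3 := le_max_right p (1 - E s)
        linarith
    have hdisj : ∀ s t : ℕ, s < t →
        Disjoint (Ico (p + E s) (q + E s)) (Ico (p + E t) (q + E t)) := by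
      intro s t hst
      rw [Set.disjoint_left]
      intro x hxs hxt
      have hy1 : x - E s ∈ Ico p q := ⟨by linarith [hxs.1], by linarith [hxs.2]⟩
      have hy2 : x - E t ∈ Ico p q := ⟨by linarith [hxt.1], by linarith [hxt.2]⟩
      have he1 : T^[s] (x - E s) = x := by rw [hE s _ hy1]; ring
      have he2 : T^[t] (x - E t) = x := by rw [hE t _ hy2]; ring
      have hc : T^[t - s] (x - E t) = x - E s := by
        apply T_cancel H.hT (hP01 hy2) (hP01 hy1) (by omega)
        rw [he2, he1]
      have h5 := hall (t - s) (by omega) (x - E t) hy2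
      rw [hc] at h5
      exact h5 (hPsub hy1)
    have hsum : (MeasureTheory.volume (⋃ s ∈ Finset.range (N+1), Ico (p + E s) (q + E s)))
        = ∑ s ∈ Finset.range (N+1), MeasureTheory.volume (Ico (p + E s) (q + E s)) := by
      apply MeasureTheory.measure_biUnion_finset
      · intro s _ t _ hst
        rcases Nat.lt_or_ge s t with h | h
        · exact hdisj s t h
        · exact (hdisj t s (by omega)).symm
      · intro s _
        exact measurableSet_Ico
    have hle : ∑ s ∈ Finset.range (N+1), MeasureTheory.volume (Ico (p + E s) (q + E s))
        ≤ 1 := by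
      rw [← hsum]
      have h1 : (⋃ s ∈ Finset.range (N+1), Ico (p + E s) (q + E s)) ⊆ Ico (0:ℝ) 1 := by
        intro x hx
        simp only [Set.mem_iUnion] at hx
        obtain ⟨s, _, hxs⟩ := hx
        exact hIsub s hxs
      calc MeasureTheory.volume (⋃ s ∈ Finset.range (N+1), Ico (p + E s) (q + E s))
          ≤ MeasureTheory.volume (Ico (0:ℝ) 1) := MeasureTheory.measure_mono h1
        _ = 1 := by simp [Real.volume_Ico]
    have hterm : ∀ s ∈ Finset.range (N+1),
        MeasureTheory.volume (Ico (p + E s) (q + E s)) = ENNReal.ofReal (q - p) := by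
      intro s _
      rw [Real.volume_Ico]
      congr 1
      ring
    rw [Finset.sum_congr rfl hterm, Finset.sum_const, Finset.card_range] at hle
    have hle2 : ((N+1 : ℕ) : ENNReal) * ENNReal.ofReal (q - p) ≤ 1 := by
      simpa [nsmul_eq_mul] using hle
    have hof : ENNReal.ofReal (((N+1 : ℕ) : ℝ) * (q - p)) ≤ ENNReal.ofReal 1 := by
      rw [ENNReal.ofReal_mul (by positivity)]
      rw [ENNReal.ofReal_natCast]
      simpa using hle2
    have hreal : ((N+1 : ℕ) : ℝ) * (q - p) ≤ 1 :=
      (ENNReal.ofReal_le_ofReal_iff (by norm_num)).mp hof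
    have hN2 : (1:ℝ) < N * (q - p) := by
      rw [div_lt_iff₀ hlen] at hN
      linarith
    push_cast at hreal
    nlinarith
  classical
  have hQex : ∃ t, 1 ≤ t ∧ ∃ y ∈ Ico p q, T^[t] y ∈ Ico a b := hKac
  set t := Nat.find hQex with htdef
  have hQt := Nat.find_spec hQex
  have hmin : ∀ s, s < t → ¬ (1 ≤ s ∧ ∃ y ∈ Ico p q, T^[s] y ∈ Ico a b) :=
    fun s hs => Nat.find_min hQex hs
  obtain ⟨ht1, y₀, hy₀P, hy₀J⟩ := hQt
  have hNMt : ∀ s', 1 ≤ s' → s' ≤ t - 1 → ∀ y ∈ Ico p q, T^[s'] y ∉ Ico a b := by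
    intro s' h1 h2 y hy hmem
    exact hmin s' (by omega) ⟨h1, y, hy, hmem⟩
  obtain ⟨e, he⟩ := RIG (t - 1) hNMt t (by omega)
  rw [he y₀ hy₀P] at hy₀J
  have hleft : a ≤ p + e := by
    by_contra hc
    push_neg at hc
    have hzp : p < a - e := by linarith
    have hzq : a - e < q := by linarith [hy₀J.1, hy₀P.2]
    have hzmem : (a - e) ∈ Ico p q := ⟨hzp.le, hzq⟩
    have hTz : T^[t] (a - e) = a := by rw [he _ hzmem]; ring
    have hfe : IsFE T a b a (a - e) t := by
      refine ⟨hPsub hzmem, ht1, hTz, ?_⟩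
      intro z'' hz'' s h1 h2 heq2
      exact hFEmk (a - e) t ht1 hzmem hNMt z'' hz'' s h1 h2 (heq2.trans hTz.symm)
    exact hnocut (a - e) hzp hzq
      ⟨⟨lt_of_le_of_lt hap hzp, lt_of_lt_of_le hzq hqb⟩, a, t, Or.inl rfl, hfe⟩
  have hright : q + e ≤ b := by
    by_contra hc
    push_neg at hc
    have hzp : p < b - e := by linarith [hy₀J.2, hy₀P.1]
    have hzq : b - e < q := by linarith
    have hzmem : (b - e) ∈ Ico p q := ⟨hzp.le, hzq⟩
    have hTz : T^[t] (b - e) = b := by rw [he _ hzmem]; ring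
    have hfe : IsFE T a b b (b - e) t := by
      refine ⟨hPsub hzmem, ht1, hTz, ?_⟩
      intro z'' hz'' s h1 h2 heq2
      exact hFEmk (b - e) t ht1 hzmem hNMt z'' hz'' s h1 h2 (heq2.trans hTz.symm)
    exact hnocut (b - e) hzp hzq
      ⟨⟨lt_of_le_of_lt hap hzp, lt_of_lt_of_le hzq hqb⟩, b, t, Or.inr (Or.inl rfl), hfe⟩
  refine ⟨t, ht1, ?_, ?_⟩
  · intro y hy
    rw [he y hy]
    exact ⟨by linarith [hy.1], by linarith [hy.2]⟩
  · intro y hy s h1 h2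
    exact hNMt s h1 (by omega) y hy


/-- Assembly: the interval `[a,b)` splits into exactly `k` half-open intervals with
constant first-return times. -/
lemma partition (H : Ctx k lam σ T n v a b c) :
    ∃ (P : Fin k → Set ℝ) (t : Fin k → ℕ),
      (∀ i, ∃ a' b' : ℝ, a' < b' ∧ P i = Ico a' b') ∧
      (Pairwise fun i j => Disjoint (P i) (P j)) ∧
      (⋃ i, P i) = Ico a b ∧
      ∀ i, 0 < t i ∧ ∀ y ∈ P i,
        T^[t i] y ∈ Ico a b ∧ ∀ s : ℕ, 0 < s → s < t i → T^[s] y ∉ Ico a b := by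
  classical
  obtain ⟨hfin, hcard⟩ := H.cut_count
  set zs : List ℝ := hfin.toFinset.sort (· ≤ ·) with hzs
  have hsorted : zs.Pairwise (· < ·) := hfin.toFinset.sortedLT_sort.pairwise
  have hmemzs : ∀ z, z ∈ zs ↔ z ∈ CutSet k lam T a b := by
    intro z
    rw [hzs, Finset.mem_sort, Set.Finite.mem_toFinset]
  have hlen : zs.length ≤ k - 1 := by
    rw [hzs, Finset.length_sort, ← Set.ncard_eq_toFinset_card _ hfin]
    exact hcard
  set d : ℕ := zs.length + 1 with hd
  have hdk : d ≤ k := by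
    have := H.hk
    omega
  have hd1 : 1 ≤ d := by omega
  set g : ℕ → ℝ := fun j => if j = 0 then a else if h2 : j - 1 < zs.length then
    zs.get ⟨j-1, h2⟩ else b with hg
  have hg0 : g 0 = a := by simp [hg]
  have hgd : ∀ j, d ≤ j → g j = b := by
    intro j hj
    simp only [hg]
    rw [if_neg (by omega), dif_neg (by omega)]
  have hgcut : ∀ j, 1 ≤ j → j < d → g j ∈ CutSet k lam T a b := by
    intro j h1 h2
    have hlt : j - 1 < zs.length := by omega
    have : g j = zs.get ⟨j-1, hlt⟩ := by
      simp only [hg]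
      rw [if_neg (by omega), dif_pos hlt]
    rw [this, ← hmemzs]
    exact List.get_mem zs _
  have hcutIoo : ∀ z ∈ CutSet k lam T a b, z ∈ Ioo a b := fun z hz => hz.1
  have hgmono : ∀ j, j + 1 ≤ d → g j < g (j + 1) := by
    intro j hj
    rcases Nat.eq_zero_or_pos j with rfl | hjpos
    · rw [hg0]
      rcases Nat.lt_or_ge 1 d with h | h
      · exact (hcutIoo _ (hgcut 1 le_rfl h)).1
      · rw [hgd 1 (by omega)]
        exact H.hab
    · rcases Nat.lt_or_ge (j+1) d with h | h
      · -- both cuts : consecutive in the sorted list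
        have hl1 : j - 1 < zs.length := by omega
        have hl2 : j < zs.length := by omega
        have e1 : g j = zs.get ⟨j-1, hl1⟩ := by
          simp only [hg]; rw [if_neg (by omega), dif_pos hl1]
        have e2 : g (j+1) = zs.get ⟨j, hl2⟩ := by
          simp only [hg]; rw [if_neg (by omega)]
          have : j + 1 - 1 = j := by omega
          simp only [this]
          rw [dif_pos hl2]
        rw [e1, e2]
        exact hsorted.sortedLT (by simp [Fin.lt_def]; omega)
      · -- g (j+1) = b
        rw [hgd (j+1) h]
        exact (hcutIoo _ (hgcut j hjpos (by omega))).2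
  have hgnocut : ∀ j, j + 1 ≤ d → ∀ z, g j < z → z < g (j + 1) →
      z ∉ CutSet k lam T a b := by
    intro j hj z hz1 hz2 hzc
    have hzzs : z ∈ zs := (hmemzs z).mpr hzc
    obtain ⟨l, hl⟩ := List.mem_iff_get.mp hzzs
    have hmono := hsorted.sortedLT
    rcases Nat.eq_zero_or_pos j with rfl | hjpos
    · -- z < g 1 but z is a cut ≥ zs[0]
      have h1d : 1 < d := by
        by_contra hcon
        have : zs.length = 0 := by omega
        rw [← hl] at hzc
        have := l.2
        omega
      have hl0 : (0:ℕ) < zs.length := by omega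
      have hle : zs.get ⟨0, hl0⟩ ≤ zs.get l := by
        rcases Nat.eq_zero_or_pos (l : ℕ) with h0 | hp
        · have hleq : l = ⟨0, hl0⟩ := Fin.ext h0
          rw [hleq]
        · exact le_of_lt (hmono (by simp [Fin.lt_def]; omega))
      have e1 : g 1 = zs.get ⟨0, hl0⟩ := by
        simp only [hg]; rw [if_neg (by omega), dif_pos hl0]
      rw [e1] at hz2
      rw [hl] at hle
      linarith
    · have hl1 : j - 1 < zs.length := by omega
      have e1 : g j = zs.get ⟨j-1, hl1⟩ := by
        simp only [hg]; rw [if_neg (by omega), dif_pos hl1]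
      rw [e1] at hz1
      -- j - 1 < l
      have hjl : j - 1 < (l : ℕ) := by
        by_contra hcon
        push_neg at hcon
        have : zs.get l ≤ zs.get ⟨j-1, hl1⟩ := by
          rcases Nat.eq_or_lt_of_le hcon with h | h
          · have hleq : l = ⟨j-1, hl1⟩ := Fin.ext h
            rw [hleq]
          · exact le_of_lt (hmono (by simp [Fin.lt_def]; omega))
        rw [hl] at this
        linarith
      rcases Nat.lt_or_ge (j+1) d with h | h
      · have hl2 : j < zs.length := by omega
        have e2 : g (j+1) = zs.get ⟨j, hl2⟩ := by
          simp only [hg]; rw [if_neg (by omega)]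
          have hj1 : j + 1 - 1 = j := by omega
          simp only [hj1]
          rw [dif_pos hl2]
        rw [e2] at hz2
        have : zs.get ⟨j, hl2⟩ ≤ zs.get l := by
          rcases Nat.eq_or_lt_of_le (show j ≤ (l:ℕ) by omega) with h' | h'
          · have hleq : l = ⟨j, hl2⟩ := Fin.ext h'.symm
            rw [hleq]
          · exact le_of_lt (hmono (by simp [Fin.lt_def]; omega))
        rw [hl] at this
        linarith
      · -- j + 1 = d : l ≤ length - 1 = j - 1 contradiction
        have := l.2
        omega
  -- the refined endpoints
  set r : ℕ := k - d with hr
  have hrk : d + r = k := by omega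
  set δ : ℝ := (g 1 - a) / (r + 1) with hδ
  have hδpos : 0 < δ := by
    rw [hδ]
    apply div_pos
    · have := hgmono 0 (by omega)
      rw [hg0] at this
      linarith
    · positivity
  set e : ℕ → ℝ := fun i => if i ≤ r then a + i * δ else g (i - r) with he
  have he0 : e 0 = a := by simp [he]
  have hek : e k = b := by
    simp only [he]
    rw [if_neg (by omega)]
    exact hgd (k - r) (by omega)
  have hestep : ∀ i, i + 1 ≤ k → e i < e (i + 1) := by
    intro i hik
    simp only [he]
    rcases Nat.lt_or_ge (i + 1) (r + 1) with h | h
    · rw [if_pos (by omega), if_pos (by omega)]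
      push_cast
      nlinarith [hδpos]
    · rcases Nat.eq_or_lt_of_le h with h' | h'
      · -- i = r
        rw [if_pos (by omega), if_neg (by omega)]
        have hir : i = r := by omega
        have hi1 : i + 1 - r = 1 := by omega
        rw [hi1, hir]
        have : a + (r:ℝ) * δ < a + ((r:ℝ) + 1) * δ := by nlinarith [hδpos]
        have hδ1 : a + ((r:ℝ) + 1) * δ = g 1 := by
          rw [hδ]
          field_simp
          ring
        linarith
      · rw [if_neg (by omega), if_neg (by omega)]
        have : i + 1 - r = (i - r) + 1 := by omega
        rw [this]
        exact hgmono (i - r) (by omega)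
  have hemono : ∀ i j, i ≤ j → j ≤ k → e i ≤ e j := by
    intro i j hij hjk
    induction j with
    | zero => interval_cases i; rfl
    | succ j ih =>
      rcases Nat.eq_or_lt_of_le hij with h | h
      · rw [h]
      · exact le_trans (ih (by omega) (by omega)) (hestep j (by omega)).le
  have hea : ∀ i, i ≤ k → a ≤ e i := by
    intro i hik
    have := hemono 0 i (by omega) hik
    rwa [he0] at this
  have heb : ∀ i, i ≤ k → e i ≤ b := by
    intro i hik
    have := hemono i k hik le_rfl
    rwa [hek] at this
  have henocut : ∀ i, i < k → ∀ z, e i < z → z < e (i + 1) → z ∉ CutSet k lam T a b := by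
    intro i hik z hz1 hz2
    rcases Nat.lt_or_ge i (r + 1) with h | h
    · -- inside the first piece (g 0, g 1)
      apply hgnocut 0 (by omega) z
      · rw [hg0]
        calc a ≤ e i := hea i (by omega)
          _ < z := hz1
      · have h1 : e (i+1) ≤ e (r+1) := hemono (i+1) (r+1) (by omega) (by omega)
        have h2 : e (r+1) = g 1 := by
          simp only [he]
          rw [if_neg (by omega)]
          congr 1
          omega
        linarith
    · -- inside piece (g (i - r), g (i - r + 1))
      apply hgnocut (i - r) (by omega) z
      · have h1 : e i = g (i - r) := by
          simp only [he]; rw [if_neg (by omega)]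
        linarith
      · have h1 : e (i + 1) = g (i - r + 1) := by
          simp only [he]; rw [if_neg (by omega)]
          congr 1
          omega
        linarith
  -- build the pieces and the return times
  have hgood : ∀ i : Fin k, ∃ t, 1 ≤ t ∧
      (∀ y ∈ Ico (e i) (e ((i:ℕ) + 1)), T^[t] y ∈ Ico a b) ∧
      (∀ y ∈ Ico (e i) (e ((i:ℕ) + 1)), ∀ s, 1 ≤ s → s < t → T^[s] y ∉ Ico a b) := by
    intro i
    exact H.piece_return (hea i (by omega)) (hestep i i.2)
      (heb ((i:ℕ)+1) i.2) (henocut i i.2)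
  choose t ht1 htin htout using hgood
  refine ⟨fun i => Ico (e i) (e ((i:ℕ) + 1)), t, ?_, ?_, ?_, ?_⟩
  · intro i
    exact ⟨e i, e ((i:ℕ)+1), hestep i i.2, rfl⟩
  · intro i j hij
    rcases Nat.lt_or_ge (i:ℕ) (j:ℕ) with h | h
    · rw [Set.disjoint_left]
      intro x hxi hxj
      have h1 : e ((i:ℕ)+1) ≤ e j := hemono _ _ (by omega) (by omega)
      have := hxi.2
      have := hxj.1
      linarith
    · have hji : (j:ℕ) < (i:ℕ) := by
        rcases Nat.eq_or_lt_of_le h with h' | h'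
        · exact absurd (Fin.ext h'.symm) hij
        · exact h'
      rw [Set.disjoint_right]
      intro x hxi hxj
      have h1 : e ((j:ℕ)+1) ≤ e i := hemono _ _ (by omega) (by omega)
      have h2 := hxi.2
      have h3 := hxj.1
      linarith
  · apply Set.eq_of_subset_of_subset
    · apply Set.iUnion_subset
      intro i x hx
      exact ⟨le_trans (hea i (by omega)) hx.1, lt_of_lt_of_le hx.2 (heb ((i:ℕ)+1) i.2)⟩
    · intro y hy
      have hne : ((Finset.range (k+1)).filter (fun j => e j ≤ y)).Nonempty := by
        refine ⟨0, ?_⟩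
        simp only [Finset.mem_filter, Finset.mem_range]
        exact ⟨by omega, by rw [he0]; exact hy.1⟩
      set jm := ((Finset.range (k+1)).filter (fun j => e j ≤ y)).max' hne with hjm
      have hjmem := ((Finset.range (k+1)).filter (fun j => e j ≤ y)).max'_mem hne
      simp only [Finset.mem_filter, Finset.mem_range] at hjmem
      have hjk : jm < k := by
        by_contra hcon
        push_neg at hcon
        have hjmk : jm = k := by omega
        apply absurd hy.2 (not_lt.2 ?_)
        calc b = e k := hek.symm
          _ = e jm := by rw [hjmk]
          _ ≤ y := hjmem.2
      have hylt : y < e (jm + 1) := by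
        by_contra hc
        push_neg at hc
        have hmem2 : jm + 1 ∈ (Finset.range (k+1)).filter (fun j => e j ≤ y) := by
          simp only [Finset.mem_filter, Finset.mem_range]
          exact ⟨by omega, hc⟩
        have := Finset.le_max' _ _ hmem2
        rw [← hjm] at this
        omega
      apply Set.mem_iUnion.mpr
      exact ⟨⟨jm, hjk⟩, hjmem.2, hylt⟩
  · intro i
    refine ⟨ht1 i, ?_⟩
    intro y hy
    exact ⟨htin i y hy, fun s hs1 hs2 => htout i y hy s hs1 hs2⟩

end Ctx

end IETProof


/-- for a regular interval exchange on `k` intervals and a factor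
`w` of the coding with cylinder interval `I_w`, the first-return map of `T` to
`I_w` partitions `I_w` into exactly `k` subintervals, on each of which the first
return time is constant. -/
theorem first_return_map_partitions_cylinder_into_k_intervals
    (k : ℕ) (lam : Fin k → ℝ) (σ : Equiv.Perm (Fin k)) (T : ℝ → ℝ)
    (hT : IsIET lam σ T) (hreg : KeaneRegular lam T)
    (x : ℝ) (hx : x ∈ Set.Ico (0:ℝ) 1)
    (U : ℕ → Fin k) (hU : IsCoding lam T x U)
    (n : ℕ) (hn : 1 ≤ n) (w : Fin n → Fin k) (hw : IsFactor U (List.ofFn w))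
    (Iw : Set ℝ) (hIw : Iw = ⋂ i : Fin n, T^[(i : ℕ)] ⁻¹' Xint lam (w i)) :
    ∃ (p : Fin k → Set ℝ) (t : Fin k → ℕ),
      (∀ i, ∃ a b : ℝ, a < b ∧ p i = Set.Ico a b) ∧
      (Pairwise fun i j => Disjoint (p i) (p j)) ∧
      (⋃ i, p i) = Iw ∧
      ∀ i, 0 < t i ∧ ∀ y ∈ p i,
        T^[t i] y ∈ Iw ∧ ∀ s : ℕ, 0 < s → s < t i → T^[s] y ∉ Iw := by
  classical
  have hk : 0 < k := by
    by_contra hk0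
    push_neg at hk0
    interval_cases k
    have h1 := hT.2.1
    simp at h1
  have hn0 : 0 < n := hn
  set v : ℕ → Fin k := fun s => if h : s < n then w ⟨s, h⟩ else w ⟨0, hn0⟩ with hv
  obtain ⟨i₀, hocc⟩ := hw
  have hne : ∃ y₀, ∀ s, s < n → T^[s] y₀ ∈ Xint lam (v s) := by
    refine ⟨T^[i₀] x, ?_⟩
    intro s hs
    have h1 : T^[s] (T^[i₀] x) = T^[s + i₀] x := (Function.iterate_add_apply T s i₀ x).symm
    have hlen : (List.ofFn w).length = n := List.length_ofFn (f := w)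
    have h3 := hocc ⟨s, by rw [hlen]; exact hs⟩
    rw [List.get_ofFn] at h3
    have h4 : U (i₀ + s) = w ⟨s, hs⟩ := by
      rw [h3]
      congr 1
    have h2 := hU (s + i₀)
    rw [Nat.add_comm s i₀, h4] at h2
    rw [h1, Nat.add_comm s i₀]
    have hvs : v s = w ⟨s, hs⟩ := by
      simp only [hv]
      rw [dif_pos hs]
    rw [hvs]
    exact h2
  obtain ⟨a, b, c, hab, hc0, hcD, hset, hrig, hqa, hqb⟩ :=
    IETProof.cylinder_structure hT hn v hne
  have H : IETProof.Ctx k lam σ T n v a b c := ⟨hT, hk, hn, hab, hrig, hqa, hqb, hcD, hc0⟩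
  have hIwset : Iw = Set.Ico a b := by
    rw [hIw, ← hset]
    ext y
    simp only [Set.mem_iInter, Set.mem_setOf_eq, Set.mem_preimage]
    constructor
    · intro h s hs
      have h5 := h ⟨s, hs⟩
      have hvs : v s = w ⟨s, hs⟩ := by
        simp only [hv]
        rw [dif_pos hs]
      rw [hvs]
      exact h5
    · intro h i
      have h5 := h i i.2
      have hvs : v (i : ℕ) = w i := by
        simp only [hv]
        rw [dif_pos i.2]
      rw [hvs] at h5
      exact h5
  obtain ⟨P, t, hP1, hP2, hP3, hP4⟩ := H.partition
  refine ⟨P, t, hP1, hP2, by rw [hIwset]; exact hP3, ?_⟩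
  intro i
  obtain ⟨h1, h2⟩ := hP4 i
  refine ⟨h1, ?_⟩
  intro y hy
  obtain ⟨h3, h4⟩ := h2 y hy
  rw [hIwset]
  exact ⟨h3, fun s hs1 hs2 => h4 s hs1 hs2⟩
end
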